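/- arXiv:2111.00681 — 8 statements merged into one kernel-verified Lean document; each statement's English description precedes it below -/
import Mathlib

section
/- Let I ⊆ k[x₁,…,xₙ] be a monomial ideal and k a positive integer. For a ∈ ℤⁿ_{≥0}, the monomial x^a lies in the integral closure of I^k if and only if a/k lies in the Newton polyhedron NP(I). -/
open MvPolynomial Pointwise

/-- The Newton polyhedron of a monomial ideal: convex hull of exponent vectors of monomials in `I`. -/
def NP {n : ℕ} {𝕜 : Type*} [Field 𝕜] (I : Ideal (MvPolynomial (Fin n) 𝕜)) : Set (Fin n → ℝ) :=
  convexHull ℝ {x | ∃ a : Fin n →₀ ℕ, monomial a (1 : 𝕜) ∈ I ∧ x = fun i => (a i : ℝ)}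

/-- `I` is a monomial ideal: generated by monomials. -/
def IsMonomialIdeal {n : ℕ} {𝕜 : Type*} [Field 𝕜] (I : Ideal (MvPolynomial (Fin n) 𝕜)) : Prop :=
  ∃ S : Set (Fin n →₀ ℕ), I = Ideal.span ((fun a => monomial a (1 : 𝕜)) '' S)

/-- The integral closure of an ideal `I`: elements satisfying an equation of integral dependence
`f^m + c₁ f^{m-1} + ⋯ + c_m = 0` with `c_i ∈ I^i`. -/
def intCl {R : Type*} [CommRing R] (I : Ideal R) : Set R :=
  {f | ∃ m : ℕ, 0 < m ∧ ∃ c : ℕ → R, (∀ i ∈ Finset.Icc 1 m, c i ∈ I ^ i) ∧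
    f ^ m + ∑ i ∈ Finset.Icc 1 m, c i * f ^ (m - i) = 0}

/-- The Newton–Okounkov body of a graded family of monomial ideals. -/
def NObody {n : ℕ} {𝕜 : Type*} [Field 𝕜] (F : ℕ → Ideal (MvPolynomial (Fin n) 𝕜)) :
    Set (Fin n → ℝ) :=
  closure (⋃ k : ℕ, {x | 0 < k ∧ ∃ a : Fin n →₀ ℕ, monomial a (1 : 𝕜) ∈ F k ∧
    x = fun i => (a i : ℝ) / k})

/-- The limiting body `⋃ₖ (1/k) NP(I_k)` of a graded family. -/
def limitBody {n : ℕ} {𝕜 : Type*} [Field 𝕜] (F : ℕ → Ideal (MvPolynomial (Fin n) 𝕜)) :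
    Set (Fin n → ℝ) :=
  ⋃ k : ℕ, ⋃ (_ : 0 < k), ((k : ℝ)⁻¹) • NP (F k)

/-- A polyhedron: a finite intersection of closed half-spaces. -/
def IsPolyhedron {n : ℕ} (P : Set (Fin n → ℝ)) : Prop :=
  ∃ H : Finset ((Fin n → ℝ) × ℝ), P = {x | ∀ h ∈ H, h.2 ≤ ∑ i, h.1 i * x i}

/-- Maximum dimension of a compact face (faces are taken to be extreme subsets). -/
noncomputable def mdc {n : ℕ} (P : Set (Fin n → ℝ)) : ℕ :=
  sSup {d | ∃ F : Set (Fin n → ℝ), F.Nonempty ∧ IsExtreme ℝ P F ∧ IsCompact F ∧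
    Module.finrank ℝ (vectorSpan ℝ F) = d}

/-- The symbolic power family of a monomial ideal of linear-power type:
`I^{(k)} = ⋂ⱼ 𝔭ⱼ^{k ωⱼ}` where `𝔭ⱼ` is generated by the variables in `supp j`. -/
noncomputable def symb {n : ℕ} {𝕜 : Type*} [Field 𝕜] {ι : Type*} [Fintype ι]
    (supp : ι → Finset (Fin n)) (ω : ι → ℕ) (k : ℕ) : Ideal (MvPolynomial (Fin n) 𝕜) :=
  ⨅ j, (Ideal.span ((fun i => (X i : MvPolynomial (Fin n) 𝕜)) '' (supp j : Set (Fin n)))) ^ (k * ω j)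

/-- The symbolic polyhedron of a monomial ideal of linear-power type. -/
def SPset {n : ℕ} {ι : Type*} (supp : ι → Finset (Fin n)) (ω : ι → ℕ) : Set (Fin n → ℝ) :=
  {x | (∀ i, 0 ≤ x i) ∧ ∀ j, (ω j : ℝ) ≤ ∑ i ∈ supp j, x i}

/-!
`⇒`: comparing coefficients of `x^(m a)` in an equation of integral dependence of `x^a` over
`I^k` puts `x^(i a)` in the support of an element of `I^(k i)` for some `i ≥ 1`. So `i a` is a sum
of `k i` exponents of monomials in `I`, and `a/k` is their average.

`⇐`: by Carathéodory, `a/k` is a positive convex combination of affinely independent exponents.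
Those weights are the unique solution of a linear system with rational coefficients, hence are
rational. Clearing denominators writes `D a` as a sum of `k D` exponents of monomials in `I`, i.e.
`(x^a)^D ∈ (I^k)^D`, which is an equation of integral dependence.
-/

theorem AffineIndependent.linearIndependent_option_elim {k ι E : Type*} [Ring k] [Fintype ι]
    {z : ι → E → k} (hz : AffineIndependent k z) :
    LinearIndependent k (fun i (o : Option E) => o.elim 1 (z i)) := by
  rw [Fintype.linearIndependent_iff]
  intro g hg
  have hsum : ∑ i, g i = 0 := by simpa using congrFun hg none
  have hcomb : ∑ i, g i • z i = 0 := by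
    funext t; simpa using congrFun hg (some t)
  exact fun i => hz.eq_zero_of_sum_eq_zero hsum hcomb i (Finset.mem_univ i)

theorem mem_convexHull_of_ratCast_mem_convexHull {E : Type*} [Finite E] {S : Set (E → ℚ)}
    {q : E → ℚ} (hq : (fun t => (q t : ℝ)) ∈ convexHull ℝ ((fun p t => (p t : ℝ)) '' S)) :
    q ∈ convexHull ℚ S := by
  obtain ⟨ι, _, z, w, hzS, hz, hw_pos, hw_sum, hwz⟩ := eq_pos_convex_span_of_mem_convexHull hq
  choose p hpS hpz using fun i => hzS ⟨i, rfl⟩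
  let v : ι → Option E → ℚ := fun i o => o.elim 1 (p i)
  let τ : Option E → ℚ := fun o => o.elim 1 q
  have hvR : LinearIndependent ℝ (fun i => algebraMap ℚ ℝ ∘ v i) := by
    have hvz : (fun i => algebraMap ℚ ℝ ∘ v i) = fun i o => o.elim 1 (z i) := by
      funext i o; cases o <;> simp [v, ← hpz i]
    exact hvz ▸ hz.linearIndependent_option_elim
  have hwτ : ∑ i, w i • (algebraMap ℚ ℝ ∘ v i) = algebraMap ℚ ℝ ∘ τ := by
    funext o; cases o with
    | none => simpa [v, τ] using hw_sum
    | some t => simpa [v, τ, ← hpz] using congrFun hwz t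
  have hτ : τ ∈ Submodule.span ℚ (Set.range v) := by
    by_contra hτ
    -- adjoining `τ` to `v` keeps it independent over `ℚ`, hence over `ℝ`
    have hτR := (linearIndependent_option.1 (linearIndependent_algebraMap_comp_iff (S := ℝ).2
      ((linearIndependent_algebraMap_comp_iff.1 hvR).option hτ))).2
    exact hτR ((Submodule.mem_span_range_iff_exists_fun ℝ).2 ⟨w, hwτ⟩)
  obtain ⟨u, hu⟩ := (Submodule.mem_span_range_iff_exists_fun ℚ).1 hτ
  have huw : ∀ i, (u i : ℝ) = w i := by
    refine Fintype.linearIndependent_iffₛ.1 hvR _ _ (hwτ ▸ ?_)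
    funext o; simpa [Finset.sum_apply] using congrArg (fun f => (f o : ℝ)) hu
  have hu_nonneg : ∀ i, 0 ≤ u i := fun i => by exact_mod_cast (huw i).symm ▸ (hw_pos i).le
  have hu_sum : ∑ i, u i = 1 := by simpa [v, τ, Finset.sum_apply] using congrFun hu none
  have hup : ∑ i, u i • p i = q := by
    funext t; simpa [v, τ, Finset.sum_apply] using congrFun hu (some t)
  exact hup ▸ (convex_convexHull ℚ S).sum_mem (fun i _ => hu_nonneg i) hu_sum
    fun i _ => subset_convexHull ℚ S (hpS i)

theorem exists_pos_nat_mul_eq_natCast {ι : Type*} [Fintype ι] {u : ι → ℚ} (hu : ∀ i, 0 ≤ u i) :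
    ∃ D : ℕ, 0 < D ∧ ∃ c : ι → ℕ, ∀ i, (c i : ℚ) = D * u i := by
  refine ⟨∏ i, (u i).den, Finset.prod_pos fun i _ => (u i).pos,
    fun i => (u i).num.toNat * ((∏ j, (u j).den) / (u i).den), fun i => ?_⟩
  have hdvd : (u i).den ∣ ∏ j, (u j).den := Finset.dvd_prod_of_mem _ (Finset.mem_univ i)
  have hnum : ((u i).num.toNat : ℚ) = (u i).num := by
    exact_mod_cast Int.toNat_of_nonneg (Rat.num_nonneg.2 (hu i))
  rw [Nat.cast_mul, hnum, Nat.cast_div hdvd (by simp), ← Rat.mul_den_eq_num]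
  field_simp

section MonomialIdeals

variable {σ R : Type*}

theorem monomial_mem_span_of_mem_support [CommSemiring R] {S : Set (σ →₀ ℕ)}
    {p : MvPolynomial σ R} (hp : p ∈ Ideal.span ((fun a => monomial a (1 : R)) '' S))
    {d : σ →₀ ℕ} (hd : d ∈ p.support) :
    monomial d (1 : R) ∈ Ideal.span ((fun a => monomial a (1 : R)) '' S) := by
  classical
  induction hp using Submodule.span_induction generalizing d with
  | mem x hx =>
    obtain ⟨e, he, rfl⟩ := hx
    rw [Finset.mem_singleton.1 (support_monomial_subset hd)]
    exact Ideal.subset_span ⟨e, he, rfl⟩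
  | zero => simp at hd
  | add x y _ _ hx hy =>
    rcases Finset.mem_union.1 (support_add hd) with h | h
    exacts [hx h, hy h]
  | smul r x _ hx =>
    obtain ⟨u, -, v, hv, rfl⟩ := Finset.mem_add.1 (support_mul r x hd)
    simpa [monomial_mul] using Ideal.mul_mem_left _ (monomial u (1 : R)) (hx hv)

theorem monomial_sum_smul_mem_pow [CommSemiring R] {I : Ideal (MvPolynomial σ R)} {ι : Type*}
    (s : Finset ι) (e : ι → σ →₀ ℕ) (c : ι → ℕ) (he : ∀ i ∈ s, monomial (e i) (1 : R) ∈ I) :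
    monomial (∑ i ∈ s, c i • e i) (1 : R) ∈ I ^ ∑ i ∈ s, c i := by
  rw [monomial_sum_one, ← Finset.prod_pow_eq_pow_sum]
  refine Ideal.prod_mem_prod fun i hi => ?_
  rw [← one_pow (c i), ← monomial_pow]
  exact Ideal.pow_mem_pow (he i hi) _


theorem monomial_pow_mem_of_mem_convexHull [CommSemiring R] {I : Ideal (MvPolynomial σ R)}
    {a : σ →₀ ℕ} {k : ℕ} (hk : 0 < k)
    (ha : (fun t => (a t : ℚ) / k) ∈
      convexHull ℚ {p | ∃ b : σ →₀ ℕ, monomial b (1 : R) ∈ I ∧ p = fun t => (b t : ℚ)}) :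
    ∃ D : ℕ, 0 < D ∧ monomial a (1 : R) ^ D ∈ (I ^ k) ^ D := by
  obtain ⟨ι, _, u, p, hu_nonneg, hu_sum, hpI, hup⟩ := mem_convexHull_iff_exists_fintype.1 ha
  choose e he hep using hpI
  obtain ⟨D, hD, c, hc⟩ := exists_pos_nat_mul_eq_natCast hu_nonneg
  have hc_sum : ∑ i, k * c i = k * D := by
    exact_mod_cast (by simp [hc, ← Finset.mul_sum, hu_sum] : ((∑ i, k * c i : ℕ) : ℚ) = k * D)
  have hce : ∑ i, (k * c i) • e i = D • a := by
    ext t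
    have hupt := congrFun hup t
    simp only [Finset.sum_apply, Pi.smul_apply, hep, smul_eq_mul] at hupt
    suffices ((∑ i, k * c i * e i t : ℕ) : ℚ) = D * a t by
      simp only [Finsupp.finsetSum_apply, Finsupp.smul_apply, smul_eq_mul]
      exact_mod_cast this
    have hk' : (k : ℚ) ≠ 0 := by positivity
    calc ((∑ i, k * c i * e i t : ℕ) : ℚ) = k * D * ∑ i, u i * e i t := by
          push_cast [hc, Finset.mul_sum]; ring_nf
      _ = D * a t := by rw [hupt]; field_simp
  refine ⟨D, hD, ?_⟩
  rw [← pow_mul, monomial_pow, one_pow, ← hce, ← hc_sum]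
  exact monomial_sum_smul_mem_pow _ e _ fun i _ => he i

theorem mem_intCl_of_pow_mem_pow [CommRing R] {J : Ideal R} {f : R} {m : ℕ} (hm : 0 < m)
    (hf : f ^ m ∈ J ^ m) : f ∈ intCl J := by
  refine ⟨m, hm, fun i => if i = m then -f ^ m else 0, fun i _ => ?_, ?_⟩
  · dsimp only
    split_ifs with h
    · exact h ▸ (J ^ m).neg_mem_iff.2 hf
    · exact zero_mem _
  · rw [Finset.sum_eq_single_of_mem m (Finset.mem_Icc.2 ⟨hm, le_rfl⟩) fun i _ hi => by simp [hi]]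
    simp

theorem exists_smul_mem_support_of_monomial_mem_intCl [CommRing R] [Nontrivial R]
    {J : Ideal (MvPolynomial σ R)} {a : σ →₀ ℕ} (h : monomial a (1 : R) ∈ intCl J) :
    ∃ i, 0 < i ∧ ∃ c ∈ J ^ i, i • a ∈ c.support := by
  classical
  obtain ⟨m, -, c, hc, heq⟩ := h
  have hcoeff : 1 + ∑ i ∈ Finset.Icc 1 m, coeff (i • a) (c i) = (0 : R) := by
    have hterm : ∀ i ∈ Finset.Icc 1 m,
        coeff (m • a) (c i * monomial a (1 : R) ^ (m - i)) = coeff (i • a) (c i) := by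
      intro i hi
      rw [monomial_pow, one_pow, ← Nat.add_sub_cancel' (Finset.mem_Icc.1 hi).2, add_smul,
        Nat.add_sub_cancel_left, coeff_mul_monomial, mul_one]
    have h := congrArg (coeff (m • a)) heq
    rwa [coeff_add, coeff_sum, Finset.sum_congr rfl hterm, monomial_pow, one_pow, coeff_monomial,
      if_pos rfl, coeff_zero] at h
  obtain ⟨i, hi, hci⟩ : ∃ i ∈ Finset.Icc 1 m, coeff (i • a) (c i) ≠ 0 := by
    by_contra! hzero
    simp [Finset.sum_eq_zero hzero] at hcoeff
  exact ⟨i, (Finset.mem_Icc.1 hi).1, c i, hc i hi, mem_support_iff.2 hci⟩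

end MonomialIdeals

section NewtonPolyhedron

variable {n : ℕ} {𝕜 : Type*} [Field 𝕜] {I : Ideal (MvPolynomial (Fin n) 𝕜)}

theorem IsMonomialIdeal.exists_sum_eq_of_mem_support_pow (hI : IsMonomialIdeal I) {N : ℕ}
    (hN : 0 < N) {p : MvPolynomial (Fin n) 𝕜} (hp : p ∈ I ^ N) {d : Fin n →₀ ℕ}
    (hd : d ∈ p.support) :
    ∃ g : Fin N → Fin n →₀ ℕ, (∀ j, monomial (g j) (1 : 𝕜) ∈ I) ∧ ∑ j, g j = d := by
  obtain ⟨S, rfl⟩ := hI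
  induction N, hN using Nat.le_induction generalizing p d with
  | base =>
    rw [pow_one] at hp
    exact ⟨fun _ => d, fun _ => monomial_mem_span_of_mem_support hp hd, by simp⟩
  | succ N _ ih =>
    rw [pow_succ] at hp
    induction hp using Submodule.mul_induction_on' generalizing d with
    | mem_mul_mem x hx y hy =>
      obtain ⟨u, hu, v, hv, rfl⟩ := Finset.mem_add.1 (support_mul x y hd)
      obtain ⟨g, hg, rfl⟩ := ih hu hx
      refine ⟨Fin.snoc g v, Fin.lastCases (by simpa using monomial_mem_span_of_mem_support hy hv)
        (by simpa using hg), by simp [Fin.sum_univ_castSucc]⟩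
    | add x _ y _ hx hy =>
      rcases Finset.mem_union.1 (support_add hd) with h | h
      exacts [hx h, hy h]

theorem sum_div_mem_NP {N : ℕ} (hN : 0 < N) {g : Fin N → Fin n →₀ ℕ}
    (hg : ∀ j, monomial (g j) (1 : 𝕜) ∈ I) : (fun t => (∑ j, g j t : ℝ) / N) ∈ NP I := by
  have hconv : Convex ℝ (NP I) := convex_convexHull ℝ _
  have hg' : ∀ j ∈ Finset.univ, (fun t => (g j t : ℝ)) ∈ NP I :=
    fun j _ => subset_convexHull ℝ _ ⟨g j, hg j, rfl⟩
  convert hconv.sum_mem (w := fun _ => (N : ℝ)⁻¹) (fun _ _ => by positivity)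
    (by simp [mul_inv_cancel₀ (by positivity : (N : ℝ) ≠ 0)]) hg' using 1
  funext t
  simp [Finset.sum_apply, ← Finset.mul_sum, div_eq_inv_mul]

theorem mem_convexHull_rat_of_ratCast_mem_NP {q : Fin n → ℚ}
    (hq : (fun t => (q t : ℝ)) ∈ NP I) :
    q ∈ convexHull ℚ {p | ∃ b : Fin n →₀ ℕ, monomial b (1 : 𝕜) ∈ I ∧ p = fun t => (b t : ℚ)} := by
  refine mem_convexHull_of_ratCast_mem_convexHull ?_
  have himage : (fun p t => (p t : ℝ)) ''
      {p : Fin n → ℚ | ∃ b : Fin n →₀ ℕ, monomial b (1 : 𝕜) ∈ I ∧ p = fun t => (b t : ℚ)} =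
      {x | ∃ b : Fin n →₀ ℕ, monomial b (1 : 𝕜) ∈ I ∧ x = fun t => (b t : ℝ)} := by
    ext x
    constructor
    · rintro ⟨-, ⟨b, hb, rfl⟩, rfl⟩
      exact ⟨b, hb, by simp⟩
    · rintro ⟨b, hb, rfl⟩
      exact ⟨_, ⟨b, hb, rfl⟩, by simp⟩
  rwa [himage]

end NewtonPolyhedron

/-- For a monomial ideal `I` and `k ≥ 1`, the monomial `x^a` lies in the
integral closure of `I^k` iff `a/k ∈ NP(I)`. -/
theorem stmt0 {n : ℕ} {𝕜 : Type*} [Field 𝕜] (I : Ideal (MvPolynomial (Fin n) 𝕜))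
    (hI : IsMonomialIdeal I) (k : ℕ) (hk : 0 < k) (a : Fin n →₀ ℕ) :
    monomial a (1 : 𝕜) ∈ intCl (I ^ k) ↔ (fun i => (a i : ℝ) / k) ∈ NP I := by
  constructor
  · intro ha
    obtain ⟨i, hi, c, hc, hia⟩ := exists_smul_mem_support_of_monomial_mem_intCl ha
    rw [← pow_mul] at hc
    obtain ⟨g, hg, hg_sum⟩ := hI.exists_sum_eq_of_mem_support_pow (Nat.mul_pos hk hi) hc hia
    convert sum_div_mem_NP (Nat.mul_pos hk hi) hg using 2 with t
    have hg_sum_t : ∑ j, (g j t : ℝ) = i * a t := by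
      simpa [Finsupp.finsetSum_apply] using congrArg (fun d => (d t : ℝ)) hg_sum
    have hi' : (i : ℝ) ≠ 0 := by positivity
    rw [hg_sum_t]
    push_cast
    field_simp
  · intro ha
    obtain ⟨D, hD, haD⟩ := monomial_pow_mem_of_mem_convexHull hk
      (mem_convexHull_rat_of_ratCast_mem_NP (q := fun t => (a t : ℚ) / k) (by simpa using ha))
    exact mem_intCl_of_pow_mem_pow hD haD
end

section
/- Let ℐ = {I_k}_{k∈ℕ} be a graded family of monomial ideals in k[x₁,…,xₙ] (i.e., I_p · I_q ⊆ I_{p+q} for all p,q). If there exists an integer c ≥ 1 such that the Newton–Okounkov body Δ(ℐ) equals (1/c)·NP(I_c), then the limiting body ⋃_{k∈ℕ} (1/k)·NP(I_k) equals (1/c)·NP(I_c), and in particular is a polyhedron. -/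
open MvPolynomial Pointwise

/-!
Each `(1/k)·NP(I_k)` is the convex hull of points `a/k` with `x^a ∈ I_k`, which lie in `Δ(ℐ)`;
as `Δ(ℐ) = (1/c)·NP(I_c)` is convex, the whole union lies in it, and `(1/c)·NP(I_c)` is one of
the sets in the union.
By Dickson's lemma a monomial ideal has finitely many minimal exponents, so `NP(I_c)` is
`conv(finite set) + ℝ≥0ⁿ`, the coordinate projection of an explicit polyhedron in `ℝ^{n+r}`;
Fourier–Motzkin elimination shows that such a projection is again a polyhedron.
-/

open Set Matrix

theorem isPolyhedron_iff {n : ℕ} {P : Set (Fin n → ℝ)} :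
    IsPolyhedron P ↔ ∃ H : Finset ((Fin n → ℝ) × ℝ), P = {x | ∀ h ∈ H, h.2 ≤ h.1 ⬝ᵥ x} :=
  Iff.rfl

theorem isPolyhedron_setOf_forall_le_dotProduct {n : ℕ} {ι : Type*} (s : Finset ι)
    (a : ι → Fin n → ℝ) (b : ι → ℝ) : IsPolyhedron {x | ∀ i ∈ s, b i ≤ a i ⬝ᵥ x} := by
  classical
  exact ⟨s.image fun i => (a i, b i), by ext; simp [dotProduct]⟩

theorem isPolyhedron_setOf_le_dotProduct {n : ℕ} (a : Fin n → ℝ) (b : ℝ) :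
    IsPolyhedron {x | b ≤ a ⬝ᵥ x} := by
  simpa using isPolyhedron_setOf_forall_le_dotProduct {()} (fun _ => a) (fun _ => b)

theorem IsPolyhedron.inter {n : ℕ} {P Q : Set (Fin n → ℝ)} (hP : IsPolyhedron P)
    (hQ : IsPolyhedron Q) : IsPolyhedron (P ∩ Q) := by
  classical
  obtain ⟨H, rfl⟩ := hP
  obtain ⟨K, rfl⟩ := hQ
  exact ⟨H ∪ K, by ext; simp [or_imp, forall_and]⟩

theorem isPolyhedron_Ici_zero {n : ℕ} : IsPolyhedron (Ici (0 : Fin n → ℝ)) := by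
  classical
  convert isPolyhedron_setOf_forall_le_dotProduct Finset.univ (fun i => Pi.single i 1) 0 using 1
  ext x
  simp [Pi.le_def]

theorem isPolyhedron_stdSimplex {n : ℕ} : IsPolyhedron (stdSimplex ℝ (Fin n)) := by
  convert ((isPolyhedron_Ici_zero (n := n)).inter (isPolyhedron_setOf_le_dotProduct 1 1)).inter
    (isPolyhedron_setOf_le_dotProduct (-1) (-1)) using 1
  ext x
  simp only [stdSimplex, mem_ofPred_eq, mem_inter_iff, mem_Ici, Pi.le_def, Pi.zero_apply,
    one_dotProduct, neg_dotProduct, neg_le_neg_iff, and_assoc, le_antisymm_iff]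
  tauto

theorem IsPolyhedron.preimage {m n : ℕ} {P : Set (Fin n → ℝ)} (hP : IsPolyhedron P)
    (f : (Fin m → ℝ) →ₗ[ℝ] Fin n → ℝ) : IsPolyhedron (f ⁻¹' P) := by
  classical
  obtain ⟨H, rfl⟩ := isPolyhedron_iff.1 hP
  refine isPolyhedron_iff.2 ⟨H.image fun h => (h.1 ᵥ* LinearMap.toMatrix' f, h.2), ?_⟩
  ext x
  simp only [mem_preimage, mem_ofPred_eq, Finset.forall_mem_image, ← dotProduct_mulVec,
    LinearMap.toMatrix'_mulVec]

theorem IsPolyhedron.smul {n : ℕ} {P : Set (Fin n → ℝ)} (hP : IsPolyhedron P) {s : ℝ}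
    (hs : s ≠ 0) : IsPolyhedron (s • P) := by
  rw [← preimage_smul_inv₀ hs]
  exact hP.preimage (s⁻¹ • LinearMap.id)

theorem Finset.exists_forall_le_and_forall_le_iff {α ι κ : Type*} [LinearOrder α] [Nonempty α]
    (s : Finset ι) (t : Finset κ) (l : ι → α) (u : κ → α) :
    (∃ x, (∀ i ∈ s, l i ≤ x) ∧ ∀ j ∈ t, x ≤ u j) ↔ ∀ i ∈ s, ∀ j ∈ t, l i ≤ u j := by
  refine ⟨fun ⟨x, hl, hu⟩ i hi j hj => (hl i hi).trans (hu j hj), fun h => ?_⟩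
  rcases s.eq_empty_or_nonempty with rfl | hs
  · obtain ⟨x, hx⟩ := (t.image u).bddBelow
    exact ⟨x, by simp, fun j hj => hx (Finset.mem_image_of_mem u hj)⟩
  · exact ⟨s.sup' hs l, fun i hi => s.le_sup' l hi,
      fun j hj => Finset.sup'_le hs l fun i hi => h i hi j hj⟩

theorem dotProduct_snoc {α : Type*} [NonUnitalNonAssocSemiring α] {m : ℕ} (a : Fin (m + 1) → α)
    (x : Fin m → α) (t : α) :
    a ⬝ᵥ (Fin.snoc x t : Fin (m + 1) → α) = Fin.init a ⬝ᵥ x + a (Fin.last m) * t := by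
  simp [dotProduct, Fin.sum_univ_castSucc, Fin.init]

theorem le_add_mul_iff_div_le {α : Type*} [Field α] [LinearOrder α] [IsStrictOrderedRing α]
    {b s c t : α} (hc : 0 < c) : b ≤ s + c * t ↔ (b - s) / c ≤ t := by
  rw [div_le_iff₀ hc]
  constructor <;> intro h <;> linarith

theorem le_add_mul_iff_le_div {α : Type*} [Field α] [LinearOrder α] [IsStrictOrderedRing α]
    {b s c t : α} (hc : c < 0) : b ≤ s + c * t ↔ t ≤ (b - s) / c := by
  rw [le_div_iff_of_neg hc]
  constructor <;> intro h <;> linarith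

theorem IsPolyhedron.exists_snoc {m : ℕ} {Q : Set (Fin (m + 1) → ℝ)} (hQ : IsPolyhedron Q) :
    IsPolyhedron {x : Fin m → ℝ | ∃ t, (Fin.snoc x t : Fin (m + 1) → ℝ) ∈ Q} := by
  classical
  obtain ⟨H, rfl⟩ := isPolyhedron_iff.1 hQ
  let c : (Fin (m + 1) → ℝ) × ℝ → ℝ := fun h => h.1 (Fin.last m)
  let a : (Fin (m + 1) → ℝ) × ℝ → Fin m → ℝ := fun h => Fin.init h.1
  let H₀ := H.filter (c · = 0)
  let Hpos := H.filter (0 < c ·)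
  let Hneg := H.filter (c · < 0)
  convert (isPolyhedron_setOf_forall_le_dotProduct H₀ a Prod.snd).inter
    (isPolyhedron_setOf_forall_le_dotProduct (Hpos ×ˢ Hneg)
      (fun pq => (-c pq.2) • a pq.1 + c pq.1 • a pq.2)
      (fun pq => -c pq.2 * pq.1.2 + c pq.1 * pq.2.2)) using 1
  ext x
  -- the constraint `h` says `h.2 ≤ a h ⬝ᵥ x + c h * t`, i.e. `t` lies on one side of `r h`
  let r : (Fin (m + 1) → ℝ) × ℝ → ℝ := fun h => (h.2 - a h ⬝ᵥ x) / c h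
  have hsplit : ∀ t, (∀ h ∈ H, h.2 ≤ h.1 ⬝ᵥ (Fin.snoc x t : Fin (m + 1) → ℝ)) ↔
      (∀ h ∈ H₀, h.2 ≤ a h ⬝ᵥ x) ∧ (∀ p ∈ Hpos, r p ≤ t) ∧ ∀ q ∈ Hneg, t ≤ r q := by
    intro t
    simp only [dotProduct_snoc, H₀, Hpos, Hneg, Finset.mem_filter, and_imp]
    refine ⟨fun h => ⟨fun h' hH hc => ?_, fun h' hH hc => (le_add_mul_iff_div_le hc).1 (h h' hH),
      fun h' hH hc => (le_add_mul_iff_le_div hc).1 (h h' hH)⟩, fun h h' hH => ?_⟩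
    · simpa [c, hc] using h h' hH
    · rcases lt_trichotomy (c h') 0 with hc | hc | hc
      · exact (le_add_mul_iff_le_div hc).2 (h.2.2 h' hH hc)
      · simpa [c, hc] using h.1 h' hH hc
      · exact (le_add_mul_iff_div_le hc).2 (h.2.1 h' hH hc)
  have hpair : ∀ p ∈ Hpos, ∀ q ∈ Hneg, r p ≤ r q ↔
      -c q * p.2 + c p * q.2 ≤ ((-c q) • a p + c p • a q) ⬝ᵥ x := by
    intro p hp q hq
    have hp : 0 < c p := (Finset.mem_filter.1 hp).2
    have hq : 0 < -c q := neg_pos.2 (Finset.mem_filter.1 hq).2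
    rw [show r q = (a q ⬝ᵥ x - q.2) / -c q by simp only [r]; ring,
      div_le_div_iff₀ hp hq, add_dotProduct, smul_dotProduct, smul_dotProduct, smul_eq_mul,
      smul_eq_mul]
    constructor <;> intro h <;> linarith
  simp only [mem_ofPred_eq, mem_inter_iff, hsplit, exists_and_left,
    Finset.exists_forall_le_and_forall_le_iff]
  refine and_congr_right fun _ => ⟨fun h pq hpq => ?_, fun h p hp q hq => ?_⟩
  · obtain ⟨hp, hq⟩ := Finset.mem_product.1 hpq
    exact (hpair _ hp _ hq).1 (h _ hp _ hq)
  · exact (hpair p hp q hq).2 (h (p, q) (Finset.mem_product.2 ⟨hp, hq⟩))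

theorem IsPolyhedron.exists_append {m r : ℕ} {Q : Set (Fin (m + r) → ℝ)} (hQ : IsPolyhedron Q) :
    IsPolyhedron {x : Fin m → ℝ | ∃ y : Fin r → ℝ, Fin.append x y ∈ Q} := by
  induction r with
  | zero =>
    have hQ' : {x : Fin m → ℝ | ∃ y : Fin 0 → ℝ, Fin.append x y ∈ Q} = Q := by
      ext x
      simp [Fin.append_right_nil]
    rwa [hQ']
  | succ r ih =>
    convert ih hQ.exists_snoc using 1
    ext x
    constructor
    · rintro ⟨y, hy⟩
      exact ⟨Fin.init y, y (Fin.last r), by rwa [← Fin.append_snoc, Fin.snoc_init_self]⟩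
    · rintro ⟨y, t, ht⟩
      exact ⟨Fin.snoc y t, by rwa [Fin.append_snoc]⟩

theorem convexHull_range_eq_image_stdSimplex {R E ι : Type*} [Field R] [LinearOrder R]
    [IsStrictOrderedRing R] [AddCommGroup E] [Module R E] [Fintype ι] (v : ι → E) :
    convexHull R (range v) = Fintype.linearCombination R v '' stdSimplex R ι := by
  classical
  have hv : Fintype.linearCombination R v ∘ (fun i => Pi.single i 1) = v :=
    funext fun i => by simp [Fintype.linearCombination_apply_single]
  rw [← convexHull_rangle_single_eq_stdSimplex, LinearMap.image_convexHull, ← range_comp, hv]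

theorem isPolyhedron_convexHull_range_add_Ici {m r : ℕ} (v : Fin r → Fin m → ℝ) :
    IsPolyhedron (convexHull ℝ (range v) + Ici 0) := by
  let x : (Fin (m + r) → ℝ) →ₗ[ℝ] Fin m → ℝ := LinearMap.funLeft ℝ ℝ (Fin.castAdd r)
  let y : (Fin (m + r) → ℝ) →ₗ[ℝ] Fin r → ℝ := LinearMap.funLeft ℝ ℝ (Fin.natAdd m)
  have hQ := (isPolyhedron_stdSimplex.preimage y).inter
    (isPolyhedron_Ici_zero.preimage (x - Fintype.linearCombination ℝ v ∘ₗ y))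
  convert hQ.exists_append using 1
  ext p
  have hx : ∀ w, x (Fin.append p w) = p := fun w => funext fun i => Fin.append_left p w i
  have hy : ∀ w, y (Fin.append p w) = w := fun w => funext fun i => Fin.append_right p w i
  simp only [convexHull_range_eq_image_stdSimplex, mem_add, mem_image, mem_Ici, mem_ofPred_eq,
    mem_inter_iff, mem_preimage, LinearMap.sub_apply, LinearMap.comp_apply, hx, hy, sub_nonneg]
  constructor
  · rintro ⟨_, ⟨w, hw, rfl⟩, z, hz, rfl⟩
    exact ⟨w, hw, le_add_of_nonneg_right hz⟩
  · rintro ⟨w, hw, hle⟩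
    exact ⟨_, ⟨w, hw, rfl⟩, p - _, sub_nonneg.2 hle, add_sub_cancel _ _⟩

theorem Set.Finite.isPolyhedron_convexHull_add_Ici {m : ℕ} {s : Set (Fin m → ℝ)}
    (hs : s.Finite) : IsPolyhedron (convexHull ℝ s + Ici 0) := by
  obtain ⟨r, v, -, rfl⟩ := hs.fin_param
  exact isPolyhedron_convexHull_range_add_Ici v

theorem exists_finset_subset_forall_exists_le {α : Type*} [PartialOrder α]
    [WellQuasiOrderedLE α] (S : Set α) : ∃ A : Finset α, ↑A ⊆ S ∧ ∀ a ∈ S, ∃ s ∈ A, s ≤ a := by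
  have hfin : {a | Minimal (· ∈ S) a}.Finite :=
    WellQuasiOrderedLE.finite_of_isAntichain (setOfPred_minimal_antichain _)
  refine ⟨hfin.toFinset, fun a ha => (hfin.mem_toFinset.1 ha).prop, fun a ha => ?_⟩
  obtain ⟨s, hsa, hs⟩ := (isPWO_of_wellQuasiOrderedLE S).exists_le_minimal ha
  exact ⟨s, hfin.mem_toFinset.2 hs, hsa⟩

theorem IsMonomialIdeal.exists_finset_monomial_mem_iff {n : ℕ} {𝕜 : Type*} [Field 𝕜]
    {I : Ideal (MvPolynomial (Fin n) 𝕜)} (hI : IsMonomialIdeal I) :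
    ∃ A : Finset (Fin n →₀ ℕ), ∀ a, monomial a (1 : 𝕜) ∈ I ↔ ∃ s ∈ A, s ≤ a := by
  classical
  obtain ⟨S, rfl⟩ := hI
  obtain ⟨A, hAS, hA⟩ := exists_finset_subset_forall_exists_le S
  refine ⟨A, fun a => ?_⟩
  rw [mem_ideal_span_monomial_image, support_monomial, if_neg one_ne_zero]
  simp only [Finset.mem_singleton, forall_eq]
  constructor
  · rintro ⟨s, hs, hsa⟩
    obtain ⟨t, ht, hts⟩ := hA s hs
    exact ⟨t, ht, hts.trans hsa⟩
  · rintro ⟨s, hs, hsa⟩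
    exact ⟨s, hAS hs, hsa⟩

theorem convexHull_range_natCast_eq_Ici {σ : Type*} [Finite σ] :
    convexHull ℝ (range fun b : σ →₀ ℕ => fun i => (b i : ℝ)) = Ici 0 := by
  refine (convexHull_min ?_ (convex_Ici 0)).antisymm fun x hx => ?_
  · rintro _ ⟨b, rfl⟩ i
    exact Nat.cast_nonneg _
  have hreal : ∀ t : ℝ, 0 ≤ t → t ∈ convexHull ℝ (range (Nat.cast : ℕ → ℝ)) := fun t ht =>
    segment_subset_convexHull (mem_range_self 0) (mem_range_self ⌈t⌉₊) <| by
      rw [Nat.cast_zero, segment_eq_Icc (Nat.cast_nonneg _)]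
      exact ⟨ht, Nat.le_ceil t⟩
  have hpi : x ∈ convexHull ℝ (univ.pi fun _ : σ => range (Nat.cast : ℕ → ℝ)) := by
    rw [convexHull_pi]
    exact fun i _ => hreal (x i) (hx i)
  refine convexHull_mono ?_ hpi
  intro y hy
  choose k hk using fun i => hy i (mem_univ i)
  exact ⟨Finsupp.equivFunOnFinite.symm k, funext fun i => by simp [hk]⟩

theorem IsMonomialIdeal.exists_finite_NP_eq {n : ℕ} {𝕜 : Type*} [Field 𝕜]
    {I : Ideal (MvPolynomial (Fin n) 𝕜)} (hI : IsMonomialIdeal I) :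
    ∃ s : Set (Fin n → ℝ), s.Finite ∧ NP I = convexHull ℝ s + Ici 0 := by
  obtain ⟨A, hA⟩ := hI.exists_finset_monomial_mem_iff
  let e : (Fin n →₀ ℕ) → Fin n → ℝ := fun a i => a i
  have he : ∀ a b, e (a + b) = e a + e b := fun a b => funext fun i => by simp [e]
  have hexp : {x | ∃ a, monomial a (1 : 𝕜) ∈ I ∧ x = e a} = e '' A + range e := by
    ext x
    simp only [hA, mem_ofPred_eq, mem_add, mem_image, mem_range, Finset.mem_coe]
    constructor
    · rintro ⟨a, ⟨s, hs, hsa⟩, rfl⟩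
      exact ⟨e s, ⟨s, hs, rfl⟩, e (a - s), ⟨a - s, rfl⟩, by rw [← he, add_tsub_cancel_of_le hsa]⟩
    · rintro ⟨_, ⟨s, hs, rfl⟩, _, ⟨b, rfl⟩, rfl⟩
      exact ⟨s + b, ⟨s, hs, le_self_add⟩, (he s b).symm⟩
  exact ⟨e '' A, A.finite_toSet.image e, by
    rw [NP, hexp, convexHull_add, convexHull_range_natCast_eq_Ici]⟩

theorem IsMonomialIdeal.isPolyhedron_NP {n : ℕ} {𝕜 : Type*} [Field 𝕜]
    {I : Ideal (MvPolynomial (Fin n) 𝕜)} (hI : IsMonomialIdeal I) : IsPolyhedron (NP I) := by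
  obtain ⟨s, hs, hNP⟩ := hI.exists_finite_NP_eq
  exact hNP ▸ hs.isPolyhedron_convexHull_add_Ici

section GradedFamily

variable {n : ℕ} {𝕜 : Type*} [Field 𝕜] {F : ℕ → Ideal (MvPolynomial (Fin n) 𝕜)}

theorem smul_NP_subset_NObody (hconv : Convex ℝ (NObody F)) {k : ℕ} (hk : 0 < k) :
    ((k : ℝ)⁻¹) • NP (F k) ⊆ NObody F := by
  rw [NP, ← convexHull_smul]
  refine convexHull_min ?_ hconv
  rintro _ ⟨_, ⟨a, ha, rfl⟩, rfl⟩
  refine subset_closure (mem_iUnion.2 ⟨k, hk, a, ha, funext fun i => ?_⟩)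
  simp [div_eq_inv_mul]

theorem limitBody_subset_NObody (hconv : Convex ℝ (NObody F)) : limitBody F ⊆ NObody F :=
  iUnion₂_subset fun _ hk => smul_NP_subset_NObody hconv hk

theorem smul_NP_subset_limitBody {k : ℕ} (hk : 0 < k) :
    ((k : ℝ)⁻¹) • NP (F k) ⊆ limitBody F :=
  subset_iUnion₂ (s := fun (k : ℕ) (_ : 0 < k) => ((k : ℝ)⁻¹) • NP (F k)) k hk

end GradedFamily

theorem stmt1_general {n : ℕ} {𝕜 : Type*} [Field 𝕜] (F : ℕ → Ideal (MvPolynomial (Fin n) 𝕜))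
    (hmon : ∀ k, IsMonomialIdeal (F k))
    (c : ℕ) (hc : 1 ≤ c) (h : NObody F = ((c : ℝ)⁻¹) • NP (F c)) :
    limitBody F = ((c : ℝ)⁻¹) • NP (F c) ∧ IsPolyhedron (limitBody F) := by
  have hconv : Convex ℝ (NObody F) := h ▸ (convex_convexHull ℝ _).smul _
  have heq : limitBody F = ((c : ℝ)⁻¹) • NP (F c) :=
    ((limitBody_subset_NObody hconv).trans h.le).antisymm (smul_NP_subset_limitBody hc)
  refine ⟨heq, heq ▸ (hmon c).isPolyhedron_NP.smul ?_⟩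
  positivity

theorem stmt1 {n : ℕ} {𝕜 : Type*} [Field 𝕜] (F : ℕ → Ideal (MvPolynomial (Fin n) 𝕜))
    (hmon : ∀ k, IsMonomialIdeal (F k)) (hgr : ∀ p q, F p * F q ≤ F (p + q))
    (c : ℕ) (hc : 1 ≤ c) (h : NObody F = ((c : ℝ)⁻¹) • NP (F c)) :
    limitBody F = ((c : ℝ)⁻¹) • NP (F c) ∧ IsPolyhedron (limitBody F) :=
  stmt1_general F hmon c hc h
end

section
/- Let ℐ = {I_k}_{k∈ℕ} be a graded family of monomial ideals. Then the following are equivalent: (i) there exists an integer c such that Δ(ℐ) = (1/c)·NP(I_c); (ii) there exists an integer c such that (1/c)·NP(I_c) = (1/(kc))·NP(I_{kc}) for all positive integers k. -/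
open MvPolynomial Pointwise

/-! Gradedness gives `k • NP(I_c) ⊆ NP(I_{kc})`, so `(1/c) NP(I_c) ⊆ (1/(kc)) NP(I_{kc})`, and the
points `a/k` with `x^a ∈ I_k` are closed under convex combinations with rational weights; hence
`Δ(ℐ)` is convex and contains every `(1/c) NP(I_c)`. This gives (i) ⇒ (ii). Conversely, under (ii)
each point `a/k` lies in `(1/(kc)) NP(I_{kc}) = (1/c) NP(I_c)`, which is closed because, by
Dickson's lemma, a Newton polyhedron is a polytope plus the nonnegative orthant. -/

open Filter Topology Set

section UpperSet

variable {M : Type*} [AddCommMonoid M] [PartialOrder M] [CanonicallyOrderedAdd M]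
  [WellQuasiOrderedLE M]

/-- Dickson's lemma, via the minimal elements of `s`. -/
theorem IsUpperSet.exists_finite_eq_add_univ {s : Set M} (hs : IsUpperSet s) :
    ∃ t : Set M, t.Finite ∧ s = t + univ := by
  have hpwo := Set.isPWO_of_wellQuasiOrderedLE s
  refine ⟨{x | Minimal (· ∈ s) x}, (setOfPred_minimal_antichain _).finite_of_partiallyWellOrderedOn
    (hpwo.mono (setOfPred_minimal_subset _)), subset_antisymm ?_ ?_⟩
  · intro x hx
    obtain ⟨z, hzx, hz⟩ := hpwo.exists_le_minimal hx
    obtain ⟨c, rfl⟩ := le_iff_exists_add.1 hzx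
    exact Set.add_mem_add hz (mem_univ c)
  · rintro _ ⟨z, hz, c, -, rfl⟩
    exact hs le_self_add hz.prop

end UpperSet

theorem convexHull_range_natCast : convexHull ℝ (range (Nat.cast : ℕ → ℝ)) = Ici 0 := by
  refine subset_antisymm (convexHull_min ?_ (convex_Ici 0)) fun x (hx : 0 ≤ x) => ?_
  · rintro _ ⟨m, rfl⟩
    exact Nat.cast_nonneg (α := ℝ) m
  · have hseg : segment ℝ (⌊x⌋₊ : ℝ) (⌊x⌋₊ + 1 : ℕ) ⊆ convexHull ℝ (range (Nat.cast : ℕ → ℝ)) :=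
      segment_subset_convexHull (mem_range_self _) (mem_range_self _)
    refine hseg ?_
    rw [segment_eq_Icc (by simp)]
    exact ⟨Nat.floor_le hx, by exact_mod_cast (Nat.lt_floor_add_one x).le⟩

theorem convex_closure_of_forall_div_combo_mem {E : Type*} [AddCommGroup E] [Module ℝ E]
    [TopologicalSpace E] [ContinuousAdd E] [ContinuousSMul ℝ E] {s : Set E}
    (hs : ∀ x ∈ s, ∀ y ∈ s, ∀ p N : ℕ, 0 < N → p ≤ N →
      ((p : ℝ) / N) • x + (1 - (p : ℝ) / N) • y ∈ s) :
    Convex ℝ (closure s) := by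
  have hcombo : ∀ x ∈ s, ∀ y ∈ s, ∀ t : ℝ, 0 ≤ t → t ≤ 1 →
      t • x + (1 - t) • y ∈ closure s := by
    intro x hx y hy t ht0 ht1
    have hlim : Tendsto (fun N : ℕ => (⌊t * N⌋₊ : ℝ) / N) atTop (𝓝 t) :=
      (tendsto_nat_floor_mul_div_atTop ht0).comp tendsto_natCast_atTop_atTop
    refine mem_closure_of_tendsto
      ((hlim.smul_const x).add ((tendsto_const_nhds.sub hlim).smul_const y)) ?_
    filter_upwards [eventually_gt_atTop 0] with N hN
    refine hs x hx y hy _ N hN (Nat.floor_le_of_le ?_)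
    nlinarith [(Nat.cast_nonneg N : (0 : ℝ) ≤ N)]
  intro x hx y hy a b ha hb hab
  obtain rfl : b = 1 - a := by linarith
  have hmaps : MapsTo (fun p : E × E => a • p.1 + (1 - a) • p.2) (s ×ˢ s) (closure s) :=
    fun p hp => hcombo p.1 hp.1 p.2 hp.2 a ha (by linarith)
  have h := hmaps.closure (by fun_prop)
  rw [closure_prod_eq, closure_closure] at h
  exact h (mk_mem_prod hx hy)

section NewtonPolyhedron

variable {n : ℕ} {𝕜 : Type*} [Field 𝕜]

def natVec {σ : Type*} : (σ →₀ ℕ) →+ (σ → ℝ) where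
  toFun a i := a i
  map_zero' := by ext; simp
  map_add' a b := by ext; simp

theorem natVec_apply {σ : Type*} (a : σ →₀ ℕ) (i : σ) : natVec a i = a i := rfl

theorem image_natVec_univ : natVec '' (univ : Set (Fin n →₀ ℕ)) =
    univ.pi fun _ => range (Nat.cast : ℕ → ℝ) := by
  ext x
  constructor
  · rintro ⟨a, -, rfl⟩ i -
    exact ⟨a i, rfl⟩
  · intro hx
    choose a ha using fun i => hx i (mem_univ i)
    exact ⟨Finsupp.equivFunOnFinite.symm a, mem_univ _, funext ha⟩

def monomialExponents {σ : Type*} (I : Ideal (MvPolynomial σ 𝕜)) : Set (σ →₀ ℕ) :=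
  {a | monomial a (1 : 𝕜) ∈ I}

theorem isUpperSet_monomialExponents {σ : Type*} (I : Ideal (MvPolynomial σ 𝕜)) :
    IsUpperSet (monomialExponents I) := by
  intro a b hab ha
  obtain ⟨c, rfl⟩ := le_iff_exists_add.1 hab
  have h := I.mul_mem_left (monomial c (1 : 𝕜)) ha
  rwa [monomial_mul, one_mul, add_comm] at h

theorem NP_eq_convexHull (I : Ideal (MvPolynomial (Fin n) 𝕜)) :
    NP I = convexHull ℝ (natVec '' monomialExponents I) := by
  unfold NP
  congr 1
  ext x
  exact ⟨fun ⟨a, ha, hx⟩ => ⟨a, ha, hx.symm⟩, fun ⟨a, ha, hx⟩ => ⟨a, ha, hx.symm⟩⟩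

/-- By Dickson's lemma `NP I` is the convex hull of finitely many points plus the nonnegative
orthant. -/
theorem isClosed_NP (I : Ideal (MvPolynomial (Fin n) 𝕜)) : IsClosed (NP I) := by
  obtain ⟨T, hT, hE⟩ := (isUpperSet_monomialExponents I).exists_finite_eq_add_univ
  have horth : convexHull ℝ (natVec '' (univ : Set (Fin n →₀ ℕ))) = univ.pi fun _ => Ici 0 := by
    rw [image_natVec_univ, convexHull_pi, convexHull_range_natCast]
  rw [NP_eq_convexHull, hE, Set.image_add, convexHull_add, horth]
  have hclosed : IsClosed (univ.pi fun _ : Fin n => Ici (0 : ℝ)) :=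
    isClosed_set_pi fun _ _ => isClosed_Ici
  exact hclosed.add_left_of_isCompact ((hT.image natVec).isCompact_convexHull ℝ)

end NewtonPolyhedron

section GradedFamily

variable {𝕜 : Type*} [Field 𝕜]

theorem add_mem_monomialExponents {σ : Type*} {F : ℕ → Ideal (MvPolynomial σ 𝕜)}
    (hgr : ∀ p q, F p * F q ≤ F (p + q)) {p q : ℕ} {a b : σ →₀ ℕ}
    (ha : a ∈ monomialExponents (F p)) (hb : b ∈ monomialExponents (F q)) :
    a + b ∈ monomialExponents (F (p + q)) := by
  have h := hgr p q (Ideal.mul_mem_mul ha hb)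
  rwa [monomial_mul, one_mul] at h

theorem nsmul_mem_monomialExponents {σ : Type*} {F : ℕ → Ideal (MvPolynomial σ 𝕜)}
    (hgr : ∀ p q, F p * F q ≤ F (p + q)) {k p : ℕ} (hk : 0 < k) {a : σ →₀ ℕ}
    (ha : a ∈ monomialExponents (F p)) :
    k • a ∈ monomialExponents (F (k * p)) := by
  induction k, hk using Nat.le_induction with
  | base => simpa using ha
  | succ k _ ih =>
    rw [succ_nsmul, Nat.succ_mul]
    exact add_mem_monomialExponents hgr ih ha

variable {n : ℕ} {F : ℕ → Ideal (MvPolynomial (Fin n) 𝕜)}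

theorem natCast_smul_NP_subset (hgr : ∀ p q, F p * F q ≤ F (p + q)) {k c : ℕ} (hk : 0 < k) :
    (k : ℝ) • NP (F c) ⊆ NP (F (k * c)) := by
  rw [NP_eq_convexHull, NP_eq_convexHull, ← convexHull_smul]
  refine convexHull_mono ?_
  rintro _ ⟨_, ⟨a, ha, rfl⟩, rfl⟩
  refine ⟨k • a, nsmul_mem_monomialExponents hgr hk ha, ?_⟩
  rw [map_nsmul]
  exact (Nat.cast_smul_eq_nsmul ℝ k _).symm

theorem inv_smul_NP_subset (hgr : ∀ p q, F p * F q ≤ F (p + q)) {k c : ℕ} (hk : 0 < k) :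
    ((c : ℝ)⁻¹) • NP (F c) ⊆ (((k * c : ℕ) : ℝ)⁻¹) • NP (F (k * c)) := by
  have hk' : (k : ℝ) ≠ 0 := by positivity
  calc ((c : ℝ)⁻¹) • NP (F c) = (((k * c : ℕ) : ℝ)⁻¹) • ((k : ℝ) • NP (F c)) := by
        rw [smul_smul, Nat.cast_mul, mul_inv, mul_right_comm, inv_mul_cancel₀ hk', one_mul]
    _ ⊆ _ := smul_set_mono (natCast_smul_NP_subset hgr hk)

theorem limitBody_subset_of_forall_eq (hgr : ∀ p q, F p * F q ≤ F (p + q)) {c : ℕ} (hc : 0 < c)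
    (hstab : ∀ k : ℕ, 0 < k →
      ((c : ℝ)⁻¹) • NP (F c) = (((k * c : ℕ) : ℝ)⁻¹) • NP (F (k * c))) :
    limitBody F ⊆ ((c : ℝ)⁻¹) • NP (F c) := by
  refine iUnion₂_subset fun k hk => ?_
  rw [hstab k hk, Nat.mul_comm]
  exact inv_smul_NP_subset hgr hc

def scaledExponents (F : ℕ → Ideal (MvPolynomial (Fin n) 𝕜)) : Set (Fin n → ℝ) :=
  ⋃ (k : ℕ) (_ : 0 < k), (k : ℝ)⁻¹ • (natVec '' monomialExponents (F k))

theorem NObody_eq_closure_scaledExponents : NObody F = closure (scaledExponents F) := by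
  unfold NObody scaledExponents
  congr 1
  ext x
  simp only [mem_iUnion, mem_ofPred_eq, exists_prop, mem_smul_set, mem_image, monomialExponents]
  refine exists_congr fun k => and_congr_right fun _ => ?_
  constructor
  · rintro ⟨a, ha, rfl⟩
    exact ⟨_, ⟨a, ha, rfl⟩, funext fun i => by simp [natVec_apply, div_eq_inv_mul]⟩
  · rintro ⟨_, ⟨a, ha, rfl⟩, rfl⟩
    exact ⟨a, ha, funext fun i => by simp [natVec_apply, div_eq_inv_mul]⟩

theorem scaledExponents_subset_limitBody : scaledExponents F ⊆ limitBody F :=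
  iUnion₂_mono fun k _ => smul_set_mono <| by rw [NP_eq_convexHull]; exact subset_convexHull ℝ _

theorem div_combo_mem_scaledExponents (hgr : ∀ p q, F p * F q ≤ F (p + q))
    {x y : Fin n → ℝ} (hx : x ∈ scaledExponents F) (hy : y ∈ scaledExponents F)
    {p N : ℕ} (hN : 0 < N) (hpN : p ≤ N) :
    ((p : ℝ) / N) • x + (1 - (p : ℝ) / N) • y ∈ scaledExponents F := by
  obtain rfl | hp := p.eq_zero_or_pos
  · simpa using hy
  obtain rfl | hpN := hpN.eq_or_lt
  · simpa [hN.ne'] using hx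
  simp only [scaledExponents, mem_iUnion] at hx hy ⊢
  obtain ⟨k, hk, _, ⟨a, ha, rfl⟩, rfl⟩ := hx
  obtain ⟨l, hl, _, ⟨b, hb, rfl⟩, rfl⟩ := hy
  have hab := add_mem_monomialExponents hgr
    (nsmul_mem_monomialExponents hgr (Nat.mul_pos hp hl) ha)
    (nsmul_mem_monomialExponents hgr (Nat.mul_pos (Nat.sub_pos_of_lt hpN) hk) hb)
  refine ⟨_, by positivity, _, ⟨_, hab, rfl⟩, ?_⟩
  rw [map_add, map_nsmul, map_nsmul, ← Nat.cast_smul_eq_nsmul ℝ, ← Nat.cast_smul_eq_nsmul ℝ]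
  have hk' : (k : ℝ) ≠ 0 := by positivity
  have hl' : (l : ℝ) ≠ 0 := by positivity
  have hN' : (N : ℝ) ≠ 0 := by positivity
  simp only [smul_add, smul_smul]
  push_cast [Nat.cast_sub hpN.le]
  rw [show (p : ℝ) * l * k + (N - p) * k * l = N * k * l by ring]
  congr 2 <;> field_simp

theorem convex_closure_scaledExponents (hgr : ∀ p q, F p * F q ≤ F (p + q)) :
    Convex ℝ (closure (scaledExponents F)) :=
  convex_closure_of_forall_div_combo_mem fun _ hx _ hy _ _ hN hpN =>
    div_combo_mem_scaledExponents hgr hx hy hN hpN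

theorem inv_smul_NP_subset_NObody (hgr : ∀ p q, F p * F q ≤ F (p + q)) {c : ℕ} (hc : 0 < c) :
    ((c : ℝ)⁻¹) • NP (F c) ⊆ NObody F := by
  rw [NObody_eq_closure_scaledExponents, NP_eq_convexHull, ← convexHull_smul]
  have hsub : (c : ℝ)⁻¹ • (natVec '' monomialExponents (F c)) ⊆ scaledExponents F :=
    subset_iUnion₂_of_subset c hc subset_rfl
  exact convexHull_min (hsub.trans subset_closure) (convex_closure_scaledExponents hgr)

end GradedFamily

theorem stmt3_general {n : ℕ} {𝕜 : Type*} [Field 𝕜] (F : ℕ → Ideal (MvPolynomial (Fin n) 𝕜))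
    (hgr : ∀ p q, F p * F q ≤ F (p + q)) :
    (∃ c : ℕ, 0 < c ∧ NObody F = ((c : ℝ)⁻¹) • NP (F c)) ↔
      (∃ c : ℕ, 0 < c ∧ ∀ k : ℕ, 0 < k →
        ((c : ℝ)⁻¹) • NP (F c) = (((k * c : ℕ) : ℝ)⁻¹) • NP (F (k * c))) := by
  constructor
  · rintro ⟨c, hc, hbody⟩
    refine ⟨c, hc, fun k hk => (inv_smul_NP_subset hgr hk).antisymm ?_⟩
    rw [← hbody]
    exact inv_smul_NP_subset_NObody hgr (Nat.mul_pos hk hc)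
  · rintro ⟨c, hc, hstab⟩
    refine ⟨c, hc, subset_antisymm ?_ (inv_smul_NP_subset_NObody hgr hc)⟩
    rw [NObody_eq_closure_scaledExponents]
    refine closure_minimal ?_ ((isClosed_NP _).smul_of_ne_zero (by positivity))
    exact scaledExponents_subset_limitBody.trans (limitBody_subset_of_forall_eq hgr hc hstab)

theorem stmt3 {n : ℕ} {𝕜 : Type*} [Field 𝕜] (F : ℕ → Ideal (MvPolynomial (Fin n) 𝕜))
    (hmon : ∀ k, IsMonomialIdeal (F k)) (hgr : ∀ p q, F p * F q ≤ F (p + q)) :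
    (∃ c : ℕ, 0 < c ∧ NObody F = ((c : ℝ)⁻¹) • NP (F c)) ↔
      (∃ c : ℕ, 0 < c ∧ ∀ k : ℕ, 0 < k →
        ((c : ℝ)⁻¹) • NP (F c) = (((k * c : ℕ) : ℝ)⁻¹) • NP (F (k * c))) :=
  stmt3_general F hgr
end

section
/- Let v ∈ ℝⁿ be a point of a polyhedron P ⊆ ℝⁿ_{≥0} with P + ℝⁿ_{≥0} ⊆ P. Then v can be written as v = u + w, where u lies on a compact face of P and w ∈ ℝⁿ_{≥0}. -/
open MvPolynomial Pointwise

/-!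
Below `v`, pick a point `u` of `P` that is minimal for the coordinatewise order (a minimiser of
the coordinate sum over the compact set `P ∩ [0, v]`). The face of `P` cut out by the constraints
active at `u` is bounded: otherwise, being closed and convex, it contains a ray `u + t d` with
`d ≠ 0`; `P ⊆ ℝⁿ_{≥0}` forces `d ≥ 0`, the active constraints vanish on `d`, and the inactive ones
have slack at `u`, so `u - ε d ∈ P` for small `ε > 0`, contradicting the minimality of `u`.
-/

open Set Filter Topology Bornology

section Ray

variable {E : Type*} [NormedAddCommGroup E] [NormedSpace ℝ E]

/-- These sets decrease in `k`, and a direction lying in all of them spans a ray in `C`. -/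
def segmentDirections (C : Set E) (u : E) (k : ℕ) : Set E :=
  Metric.sphere 0 1 ∩ ⋂ s ∈ Icc (0 : ℝ) k, (fun d => u + s • d) ⁻¹' C

theorem Convex.exists_ne_zero_forall_add_smul_mem_of_not_isBounded [FiniteDimensional ℝ E]
    {C : Set E} (hconv : Convex ℝ C) (hclosed : IsClosed C) (hunb : ¬IsBounded C)
    {u : E} (hu : u ∈ C) : ∃ d ≠ 0, ∀ t : ℝ, 0 ≤ t → u + t • d ∈ C := by
  have hclosed_k (k : ℕ) : IsClosed (segmentDirections C u k) :=
    Metric.isClosed_sphere.inter <| isClosed_biInter fun s _ =>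
      hclosed.preimage (continuous_const.add (continuous_const_smul s))
  have hanti (k : ℕ) : segmentDirections C u (k + 1) ⊆ segmentDirections C u k :=
    inter_subset_inter_right _ <| biInter_subset_biInter_left <|
      Icc_subset_Icc_right (by push_cast; linarith)
  have hne (k : ℕ) : (segmentDirections C u k).Nonempty := by
    have hout : ¬C ⊆ Metric.closedBall u k := fun h => hunb (Metric.isBounded_closedBall.subset h)
    obtain ⟨x, hxC, hx⟩ := not_subset.1 hout
    rw [Metric.mem_closedBall, not_le, dist_eq_norm] at hx
    have hpos : 0 < ‖x - u‖ := (Nat.cast_nonneg k).trans_lt hx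
    refine ⟨‖x - u‖⁻¹ • (x - u), by simp [norm_smul, hpos.ne'], mem_iInter₂.2 fun s hs => ?_⟩
    rw [mem_preimage, smul_smul, ← div_eq_mul_inv]
    exact hconv.add_smul_sub_mem hu hxC ⟨div_nonneg hs.1 hpos.le,
      (div_le_one hpos).2 (hs.2.trans hx.le)⟩
  obtain ⟨d, hd⟩ := IsCompact.nonempty_iInter_of_sequence_nonempty_isCompact_isClosed _ hanti hne
    ((isCompact_sphere 0 1).of_isClosed_subset (hclosed_k 0) inter_subset_left) hclosed_k
  rw [mem_iInter] at hd
  refine ⟨d, ne_zero_of_mem_sphere one_ne_zero ⟨d, (hd 0).1⟩, fun t ht => ?_⟩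
  exact mem_iInter₂.1 (hd ⌈t⌉₊).2 t ⟨ht, Nat.le_ceil t⟩

end Ray

theorem nonneg_of_forall_add_smul_mem {ι : Type*} {S : Set (ι → ℝ)} (hS : BddBelow S)
    {u d : ι → ℝ} (hray : ∀ t : ℝ, 0 ≤ t → u + t • d ∈ S) : 0 ≤ d := by
  obtain ⟨a, ha⟩ := hS
  intro i
  by_contra! hdi
  have hau : a i ≤ u i := by simpa using ha (hray 0 le_rfl) i
  have hbelow := ha (hray ((a i - u i - 1) / d i) (div_nonneg_of_nonpos (by linarith) hdi.le)) i
  simp only [Pi.add_apply, Pi.smul_apply, smul_eq_mul, div_mul_cancel₀ _ hdi.ne] at hbelow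
  linarith

theorem isExtreme_setOf_eq_of_le {E : Type*} [AddCommGroup E] [Module ℝ E] (f : E →ₗ[ℝ] ℝ)
    (c : ℝ) : IsExtreme ℝ {x | c ≤ f x} {x | f x = c} := by
  refine ⟨fun x hx => hx.ge, ?_⟩
  rintro x₁ (hx₁ : c ≤ f x₁) x₂ (hx₂ : c ≤ f x₂) x (hx : f x = c) ⟨a, b, ha, hb, hab, rfl⟩
  simp only [map_add, map_smul, smul_eq_mul] at hx
  have hsum : a * (f x₁ - c) + b * (f x₂ - c) = 0 := by linear_combination hx - c * hab
  refine le_antisymm ?_ hx₁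
  by_contra! h
  linarith [mul_pos ha (sub_pos.2 h), mul_nonneg hb.le (sub_nonneg.2 hx₂)]

section Polyhedron

variable {ι : Type*} [Fintype ι]

theorem IsClosed.exists_minimal_le {S : Set (ι → ℝ)} (hclosed : IsClosed S) (hS : BddBelow S)
    {v : ι → ℝ} (hv : v ∈ S) : ∃ u, Minimal (· ∈ S) u ∧ u ≤ v := by
  obtain ⟨a, ha⟩ := hS
  have hK : IsCompact (S ∩ Iic v) :=
    isCompact_Icc.of_isClosed_subset (hclosed.inter isClosed_Iic) fun x hx => ⟨ha hx.1, hx.2⟩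
  obtain ⟨u, ⟨huS, huv⟩, hmin⟩ := hK.exists_isMinOn ⟨v, hv, le_rfl (a := v)⟩
    (continuous_finsetSum Finset.univ fun i _ => continuous_apply i).continuousOn
  refine ⟨u, ⟨huS, fun y hyS hyu => ?_⟩, huv⟩
  have hsum : ∑ i, y i = ∑ i, u i :=
    le_antisymm (Finset.sum_le_sum fun i _ => hyu i) (hmin ⟨hyS, hyu.trans huv⟩)
  exact fun i => ((Finset.sum_eq_sum_iff_of_le fun i _ => hyu i).1 hsum i (Finset.mem_univ i)).ge

def polyhedron (H : Finset ((ι → ℝ) × ℝ)) : Set (ι → ℝ) :=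
  {x | ∀ h ∈ H, h.2 ≤ h.1 ⬝ᵥ x}

/-- The smallest face of `polyhedron H` containing `u`. -/
def activeFace (H : Finset ((ι → ℝ) × ℝ)) (u : ι → ℝ) : Set (ι → ℝ) :=
  {x ∈ polyhedron H | ∀ h ∈ H, h.1 ⬝ᵥ u = h.2 → h.1 ⬝ᵥ x = h.2}

variable {H : Finset ((ι → ℝ) × ℝ)} {u : ι → ℝ}

theorem isClosed_polyhedron : IsClosed (polyhedron H) := by
  simp only [polyhedron, ofPred_forall]
  exact isClosed_biInter fun h _ =>
    isClosed_le continuous_const (continuous_const.dotProduct continuous_id)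

theorem mem_activeFace_self (hu : u ∈ polyhedron H) : u ∈ activeFace H u :=
  ⟨hu, fun _ _ => id⟩

theorem convex_polyhedron : Convex ℝ (polyhedron H) := by
  simp only [polyhedron, ofPred_forall]
  exact convex_iInter₂ fun h _ => convex_halfSpace_ge (dotProductBilin ℝ ℝ h.1).isLinear h.2

theorem activeFace_eq_inter : activeFace H u =
    polyhedron H ∩ ⋂ h ∈ H, ⋂ (_ : h.1 ⬝ᵥ u = h.2), {x | h.1 ⬝ᵥ x = h.2} := by
  ext x
  simp [activeFace]

theorem isClosed_activeFace : IsClosed (activeFace H u) := by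
  rw [activeFace_eq_inter]
  exact isClosed_polyhedron.inter <| isClosed_biInter fun h _ => isClosed_iInter fun _ =>
    isClosed_eq (continuous_const.dotProduct continuous_id) continuous_const

theorem convex_activeFace : Convex ℝ (activeFace H u) := by
  rw [activeFace_eq_inter]
  exact convex_polyhedron.inter <| convex_iInter₂ fun h _ => convex_iInter fun _ =>
    convex_hyperplane (dotProductBilin ℝ ℝ h.1).isLinear h.2

theorem isExtreme_activeFace : IsExtreme ℝ (polyhedron H) (activeFace H u) := by
  refine ⟨fun x hx => hx.1, fun x₁ hx₁ x₂ hx₂ x hx hseg => ⟨hx₁, fun h hH hact => ?_⟩⟩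
  exact ((isExtreme_setOf_eq_of_le (dotProductBilin ℝ ℝ h.1) h.2).left_mem_of_mem_openSegment
    (hx₁ h hH) (hx₂ h hH) (hx.2 h hH hact) hseg)

theorem exists_pos_add_smul_mem_polyhedron (hu : u ∈ polyhedron H) {d : ι → ℝ}
    (hd : ∀ h ∈ H, h.1 ⬝ᵥ u = h.2 → h.1 ⬝ᵥ d = 0) : ∃ ε > (0 : ℝ), u + ε • d ∈ polyhedron H := by
  have hev (h) (hH : h ∈ H) : ∀ᶠ t in 𝓝 (0 : ℝ), h.2 ≤ h.1 ⬝ᵥ (u + t • d) := by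
    rcases (hu h hH).eq_or_lt with hact | hslack
    · exact Eventually.of_forall fun t => by
        simp [dotProduct_add, dotProduct_smul, hd h hH hact.symm, ← hact]
    · have hcont : Continuous fun t : ℝ => h.1 ⬝ᵥ (u + t • d) :=
        continuous_const.dotProduct (continuous_const.add (continuous_id.smul continuous_const))
      exact (continuousAt_const.eventually_lt hcont.continuousAt (by simpa using hslack)).mono
        fun t ht => ht.le
  obtain ⟨ε, hmem, hε⟩ := ((((eventually_all_finset H).2 hev).filter_mono nhdsWithin_le_nhds).and
    (self_mem_nhdsWithin (s := Ioi 0))).exists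
  exact ⟨ε, hε, hmem⟩

theorem isBounded_activeFace_of_minimal (hbdd : BddBelow (polyhedron H))
    (hu : Minimal (· ∈ polyhedron H) u) : IsBounded (activeFace H u) := by
  by_contra hunb
  obtain ⟨d, hd0, hray⟩ := convex_activeFace.exists_ne_zero_forall_add_smul_mem_of_not_isBounded
    isClosed_activeFace hunb (mem_activeFace_self hu.1)
  have hd_nonneg : 0 ≤ d := nonneg_of_forall_add_smul_mem hbdd fun t ht => (hray t ht).1
  have hd_active (h) (hH : h ∈ H) (hact : h.1 ⬝ᵥ u = h.2) : h.1 ⬝ᵥ d = 0 := by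
    have := (hray 1 zero_le_one).2 h hH hact
    rw [one_smul, dotProduct_add, hact] at this
    linarith
  obtain ⟨ε, hε, hmem⟩ := exists_pos_add_smul_mem_polyhedron hu.1 (d := -d)
    (by simpa [dotProduct_neg] using hd_active)
  have hge : u ≤ u + ε • -d := hu.2 hmem (by simpa using smul_nonneg hε.le hd_nonneg)
  rw [le_add_iff_nonneg_right, smul_nonneg_iff_nonneg_of_pos_left hε, neg_nonneg] at hge
  exact hd0 (le_antisymm hge hd_nonneg)

end Polyhedron

theorem stmt9_general {n : ℕ} (P : Set (Fin n → ℝ)) (hpoly : IsPolyhedron P)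
    (hsub : ∀ x ∈ P, ∀ i, 0 ≤ x i)
    (v : Fin n → ℝ) (hv : v ∈ P) :
    ∃ u w : Fin n → ℝ,
      (∃ Fc : Set (Fin n → ℝ), IsExtreme ℝ P Fc ∧ IsCompact Fc ∧ u ∈ Fc) ∧
      (∀ i, 0 ≤ w i) ∧ v = u + w := by
  obtain ⟨H, rfl : P = polyhedron H⟩ := hpoly
  have hbdd : BddBelow (polyhedron H) := ⟨0, hsub⟩
  obtain ⟨u, hmin, huv⟩ := isClosed_polyhedron.exists_minimal_le hbdd hv
  refine ⟨u, v - u, ⟨activeFace H u, isExtreme_activeFace, ?_, mem_activeFace_self hmin.1⟩,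
    sub_nonneg.2 huv, (add_sub_cancel u v).symm⟩
  exact Metric.isCompact_of_isClosed_isBounded isClosed_activeFace
    (isBounded_activeFace_of_minimal hbdd hmin)

/-- any point of a polyhedron in the nonnegative orthant absorbing the
orthant decomposes as a point on a compact face plus a nonnegative vector. -/
theorem stmt9 {n : ℕ} (P : Set (Fin n → ℝ)) (hpoly : IsPolyhedron P)
    (hsub : ∀ x ∈ P, ∀ i, 0 ≤ x i)
    (habs : ∀ x ∈ P, ∀ w : Fin n → ℝ, (∀ i, 0 ≤ w i) → x + w ∈ P)
    (v : Fin n → ℝ) (hv : v ∈ P) :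
    ∃ u w : Fin n → ℝ,
      (∃ Fc : Set (Fin n → ℝ), IsExtreme ℝ P Fc ∧ IsCompact Fc ∧ u ∈ Fc) ∧
      (∀ i, 0 ≤ w i) ∧ v = u + w :=
  stmt9_general P hpoly hsub v hv
end

section
/- Let I be a monomial ideal of linear-power type with vertices v₁,…,v_r of SP(I), and let c = lcm of the denominators of the coordinates of the v_i. If d is any positive integer with NP(I^{(d)}) = d·SP(I), then c divides d. In particular, c is the smallest such integer. -/
open MvPolynomial Pointwise

/-! Scaling by `d` sends the extreme points of `SP(I)` onto those of `d • SP(I) = NP(I^{(d)})`, and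
every extreme point of a Newton polyhedron is the exponent vector of a monomial, hence integral.
So `d` clears all denominators of the vertices of `SP(I)`, and the minimality of `c` gives
`c ∣ d`. -/

theorem extremePoints_smul {𝕜 E : Type*} [Field 𝕜] [LinearOrder 𝕜] [IsStrictOrderedRing 𝕜]
    [AddCommGroup E] [Module 𝕜 E] {a : 𝕜} (ha : a ≠ 0) (s : Set E) :
    Set.extremePoints 𝕜 (a • s) = a • Set.extremePoints 𝕜 s := by
  simpa only [LinearEquiv.smulOfNeZero_apply, Set.image_smul] using
    (image_extremePoints (LinearEquiv.smulOfNeZero 𝕜 E a ha) s).symm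

theorem exists_monomial_mem_of_mem_extremePoints_NP {n : ℕ} {𝕜 : Type*} [Field 𝕜]
    {I : Ideal (MvPolynomial (Fin n) 𝕜)} {v : Fin n → ℝ} (hv : v ∈ Set.extremePoints ℝ (NP I)) :
    ∃ a : Fin n →₀ ℕ, monomial a (1 : 𝕜) ∈ I ∧ v = fun i => (a i : ℝ) := by
  simpa using extremePoints_convexHull_subset hv

theorem stmt12_general {n : ℕ} {𝕜 : Type*} [Field 𝕜] {ι : Type*} [Fintype ι]
    (supp : ι → Finset (Fin n))
    (ω : ι → ℕ)
    (c : ℕ)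
    (hcmin : ∀ m : ℕ, 0 < m →
      (∀ v ∈ Set.extremePoints ℝ (SPset supp ω), ∀ i, ∃ z : ℤ, (m : ℝ) * v i = z) → c ∣ m)
    (d : ℕ) (hd0 : 0 < d)
    (hd : NP (symb (𝕜 := 𝕜) supp ω d) = (d : ℝ) • SPset supp ω) :
    c ∣ d := by
  refine hcmin d hd0 fun v hv i => ?_
  have hdv : (d : ℝ) • v ∈ Set.extremePoints ℝ (NP (symb (𝕜 := 𝕜) supp ω d)) := by
    rw [hd, extremePoints_smul (Nat.cast_ne_zero.mpr hd0.ne')]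
    exact Set.smul_mem_smul_set hv
  obtain ⟨a, -, ha⟩ := exists_monomial_mem_of_mem_extremePoints_NP hdv
  exact ⟨a i, by simpa using congrFun ha i⟩

/-- `c` divides any positive `d` with `NP(I^{(d)}) = d · SP(I)`. -/
theorem stmt12 {n : ℕ} {𝕜 : Type*} [Field 𝕜] {ι : Type*} [Fintype ι] [Nonempty ι]
    (supp : ι → Finset (Fin n)) (hsupp : ∀ j, (supp j).Nonempty)
    (ω : ι → ℕ) (hω : ∀ j, 0 < ω j)
    (c : ℕ) (hc0 : 0 < c)
    (hcint : ∀ v ∈ Set.extremePoints ℝ (SPset supp ω), ∀ i, ∃ z : ℤ, (c : ℝ) * v i = z)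
    (hcmin : ∀ m : ℕ, 0 < m →
      (∀ v ∈ Set.extremePoints ℝ (SPset supp ω), ∀ i, ∃ z : ℤ, (m : ℝ) * v i = z) → c ∣ m)
    (d : ℕ) (hd0 : 0 < d)
    (hd : NP (symb (𝕜 := 𝕜) supp ω d) = (d : ℝ) • SPset supp ω) :
    c ∣ d :=
  stmt12_general supp ω c hcmin d hd0 hd
end

section
/- Let I = (xy, yz, zx) ⊆ k[x,y,z]. Then NP(I^{(2)}) = 2·SP(I), whereas NP(I) ≠ SP(I). -/
/-!
A monomial `x^a` lies in `(x_i : i ∈ s)^k` exactly when `∑_{i ∈ s} a_i ≥ k`, so the exponents of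
`I^{(2)}` are the lattice points of `2·SP(I)` and `NP(I^{(2)}) ⊆ 2·SP(I)`. Conversely, a Newton
polyhedron is closed under adding the positive orthant, and every point of `2·SP(I)` dominates a
point of a segment from `(1,1,1)` to one of `(0,2,2)`, `(2,0,2)`, `(2,2,0)`, all exponents of
`I^{(2)}`. Finally `(1/2,1/2,1/2) ∈ SP(I)`, whereas `I ⊆ (x,y,z)^2` forces coordinate sum `≥ 2`
on `NP(I)`.
-/

open MvPolynomial Pointwise

lemma Finsupp.sum_add_single_one_apply {σ : Type*} {s : Finset σ} {i : σ} (hi : i ∈ s)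
    (b : σ →₀ ℕ) : ∑ j ∈ s, (b + Finsupp.single i 1 : σ →₀ ℕ) j = ∑ j ∈ s, b j + 1 := by
  simp only [Finsupp.add_apply, Finset.sum_add_distrib, add_right_inj]
  rw [Finset.sum_eq_single_of_mem i hi fun j _ hj => Finsupp.single_eq_of_ne hj,
    Finsupp.single_eq_same]

namespace MvPolynomial

variable {σ R : Type*} [CommSemiring R]

lemma span_X_image_pow_le_span_monomial (s : Finset σ) (k : ℕ) :
    Ideal.span (X '' (s : Set σ) : Set (MvPolynomial σ R)) ^ k ≤
      Ideal.span ((fun b => monomial b (1 : R)) '' {b | k ≤ ∑ i ∈ s, b i}) := by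
  induction k with
  | zero =>
    rw [pow_zero, Ideal.one_eq_top, top_le_iff, Ideal.eq_top_iff_one]
    exact Ideal.subset_span ⟨0, by simp, by simp⟩
  | succ k ih =>
    rw [pow_succ]
    refine (Ideal.mul_mono_left ih).trans ?_
    rw [Ideal.span_mul_span', Ideal.span_le]
    rintro _ ⟨_, ⟨b, hb, rfl⟩, _, ⟨i, hi, rfl⟩, rfl⟩
    refine Ideal.subset_span ⟨b + Finsupp.single i 1, ?_, by simp [monomial_add_single]⟩
    show k + 1 ≤ _
    rw [Finsupp.sum_add_single_one_apply hi]
    exact Nat.succ_le_succ hb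

lemma monomial_mem_span_X_image_pow_iff [Nontrivial R] (s : Finset σ) (k : ℕ) (a : σ →₀ ℕ) :
    monomial a (1 : R) ∈ Ideal.span (X '' (s : Set σ) : Set (MvPolynomial σ R)) ^ k ↔
      k ≤ ∑ i ∈ s, a i := by
  constructor
  · intro h
    obtain ⟨b, hb, hba⟩ := mem_ideal_span_monomial_image.1
      (span_X_image_pow_le_span_monomial s k h) a (by classical simp [support_monomial])
    exact hb.trans (Finset.sum_le_sum fun i _ => hba i)
  · induction k generalizing a with
    | zero => simp
    | succ k ih =>
      intro h
      obtain ⟨i, hi, hai⟩ : ∃ i ∈ s, a i ≠ 0 := by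
        by_contra! h0
        simp [Finset.sum_eq_zero h0] at h
      obtain ⟨b, rfl⟩ : ∃ b, a = b + Finsupp.single i 1 :=
        ⟨a - Finsupp.single i 1, (tsub_add_cancel_of_le (by simpa [Nat.one_le_iff_ne_zero])).symm⟩
      rw [monomial_add_single, pow_one, pow_succ]
      refine Ideal.mul_mem_mul (ih b ?_) (Ideal.subset_span ⟨i, hi, rfl⟩)
      rwa [Finsupp.sum_add_single_one_apply hi, Nat.succ_le_succ_iff] at h

lemma X_mul_X_mem_span_X_image_sq {s : Finset σ} {i j : σ} (hi : i ∈ s) (hj : j ∈ s) :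
    X i * X j ∈ Ideal.span (X '' (s : Set σ) : Set (MvPolynomial σ R)) ^ 2 :=
  sq (Ideal.span (X '' (s : Set σ) : Set (MvPolynomial σ R))) ▸
    Ideal.mul_mem_mul (Ideal.subset_span ⟨i, hi, rfl⟩) (Ideal.subset_span ⟨j, hj, rfl⟩)

end MvPolynomial

section NewtonPolyhedron

variable {n : ℕ} {𝕜 : Type*} [Field 𝕜] {J K : Ideal (MvPolynomial (Fin n) 𝕜)}

lemma monomial_mem_symb_iff {ι : Type*} [Fintype ι] (supp : ι → Finset (Fin n)) (ω : ι → ℕ)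
    (k : ℕ) (a : Fin n →₀ ℕ) :
    monomial a (1 : 𝕜) ∈ symb supp ω k ↔ ∀ j, k * ω j ≤ ∑ i ∈ supp j, a i := by
  simp only [symb, Submodule.mem_iInf]
  exact forall_congr' fun j => monomial_mem_span_X_image_pow_iff _ _ a

lemma NP_mono (h : J ≤ K) : NP J ⊆ NP K :=
  convexHull_mono fun _ ⟨a, ha, hx⟩ => ⟨a, h ha, hx⟩

lemma natCast_mem_NP {a : Fin n →₀ ℕ} (ha : monomial a (1 : 𝕜) ∈ J) :
    (fun i => (a i : ℝ)) ∈ NP J :=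
  subset_convexHull ℝ _ ⟨a, ha, rfl⟩

lemma NP_subset_Ici : NP J ⊆ Set.Ici 0 :=
  convexHull_min (by rintro _ ⟨a, -, rfl⟩ i; exact Nat.cast_nonneg _) (convex_Ici 0)

lemma NP_span_X_image_pow_subset (s : Finset (Fin n)) (k : ℕ) :
    NP (Ideal.span (X '' (s : Set (Fin n)) : Set (MvPolynomial (Fin n) 𝕜)) ^ k) ⊆
      {x | (k : ℝ) ≤ ∑ i ∈ s, x i} := by
  refine convexHull_min ?_ (convex_halfSpace_ge ⟨fun x y => Finset.sum_add_distrib,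
    fun c x => (Finset.mul_sum s x c).symm⟩ _)
  rintro _ ⟨a, ha, rfl⟩
  show (k : ℝ) ≤ ∑ i ∈ s, (a i : ℝ)
  exact_mod_cast (monomial_mem_span_X_image_pow_iff s k a).1 ha

lemma NP_symb_subset_SPset {ι : Type*} [Fintype ι] (supp : ι → Finset (Fin n)) (ω : ι → ℕ)
    (k : ℕ) : NP (symb (𝕜 := 𝕜) supp ω k) ⊆ SPset supp (fun j => k * ω j) := fun x hx =>
  ⟨NP_subset_Ici hx, fun j => by
    exact_mod_cast NP_span_X_image_pow_subset _ _ (NP_mono (iInf_le _ j) hx)⟩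

lemma add_natCast_single_mem_NP {y : Fin n → ℝ} (hy : y ∈ NP J) (i : Fin n) (m : ℕ) :
    y + Pi.single i (m : ℝ) ∈ NP J := by
  unfold NP at hy ⊢
  have hmem := Set.add_mem_add hy
    (subset_convexHull ℝ _ (Set.mem_singleton (Pi.single i (m : ℝ))))
  rw [← convexHull_add] at hmem
  refine convexHull_mono ?_ hmem
  rintro _ ⟨_, ⟨a, ha, rfl⟩, _, rfl, rfl⟩
  refine ⟨a + Finsupp.single i m, by rw [monomial_add_single]; exact J.mul_mem_right _ ha, ?_⟩
  ext j
  rcases eq_or_ne j i with rfl | hj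
  · simp
  · simp [hj]

lemma add_single_mem_NP {y : Fin n → ℝ} (hy : y ∈ NP J) (i : Fin n) {t : ℝ} (ht : 0 ≤ t) :
    y + Pi.single i t ∈ NP J := by
  obtain ⟨m, hm⟩ := exists_nat_gt t
  have hm0 : (0 : ℝ) < m := ht.trans_lt hm
  have hcomb : y + Pi.single i t = (1 - t / m) • y + (t / m) • (y + Pi.single i (m : ℝ)) := by
    ext j
    rcases eq_or_ne j i with rfl | hj
    · simp only [Pi.add_apply, Pi.single_eq_same, smul_add, Pi.smul_apply, smul_eq_mul]
      field_simp
      ring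
    · simp only [Pi.add_apply, Pi.single_eq_of_ne hj, add_zero, smul_add, Pi.smul_apply,
        smul_eq_mul, mul_zero]
      ring
  rw [hcomb]
  exact convex_convexHull ℝ _ hy (add_natCast_single_mem_NP hy i m)
    (sub_nonneg.2 ((div_le_one hm0).2 hm.le)) (div_nonneg ht hm0.le) (sub_add_cancel _ _)

lemma add_mem_NP {y z : Fin n → ℝ} (hy : y ∈ NP J) (hz : 0 ≤ z) : y + z ∈ NP J := by
  rw [← Finset.univ_sum_single z]
  induction (Finset.univ : Finset (Fin n)) using Finset.induction_on with
  | empty => simpa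
  | insert i s hi ih =>
    rw [Finset.sum_insert hi, add_comm (Pi.single i (z i) : Fin n → ℝ), ← add_assoc]
    exact add_single_mem_NP ih i (hz i)

lemma mem_NP_of_le {v x : Fin n → ℝ} (hv : v ∈ NP J) (hvx : v ≤ x) : x ∈ NP J := by
  simpa using add_mem_NP hv (sub_nonneg.2 hvx)

lemma natCast_mem_NP_symb {ι : Type*} [Fintype ι] {supp : ι → Finset (Fin n)} {ω : ι → ℕ}
    {k : ℕ} (f : Fin n → ℕ) (hf : ∀ j, k * ω j ≤ ∑ i ∈ supp j, f i) :
    (fun i => (f i : ℝ)) ∈ NP (symb (𝕜 := 𝕜) supp ω k) :=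
  natCast_mem_NP (a := Finsupp.equivFunOnFinite.symm f) ((monomial_mem_symb_iff _ _ _ _).2 hf)

end NewtonPolyhedron

lemma natCast_smul_SPset {n : ℕ} {ι : Type*} (supp : ι → Finset (Fin n)) (ω : ι → ℕ) {k : ℕ}
    (hk : k ≠ 0) : (k : ℝ) • SPset supp ω = SPset supp (fun j => k * ω j) := by
  have hk' : (0 : ℝ) < k := Nat.cast_pos.2 (Nat.pos_of_ne_zero hk)
  ext x
  rw [Set.mem_smul_set_iff_inv_smul_mem₀ hk'.ne']
  simp only [SPset, Set.mem_ofPred_eq, Pi.smul_apply, smul_eq_mul, ← Finset.mul_sum,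
    mul_nonneg_iff_of_pos_left (inv_pos.2 hk'), le_inv_mul_iff₀ hk', Nat.cast_mul]

local notation "𝒯" => ![({0, 1} : Finset (Fin 3)), {1, 2}, {2, 0}]

lemma mem_SPset_triangle_iff (c : ℕ) (x : Fin 3 → ℝ) :
    x ∈ SPset 𝒯 (fun _ => c) ↔
      (∀ i, 0 ≤ x i) ∧ c ≤ x 0 + x 1 ∧ c ≤ x 1 + x 2 ∧ c ≤ x 2 + x 0 := by
  simp [SPset, Fin.forall_fin_succ]

lemma SPset_triangle_subset_NP_symb {𝕜 : Type*} [Field 𝕜] :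
    SPset 𝒯 (fun _ => 2) ⊆ NP (symb (𝕜 := 𝕜) 𝒯 (fun _ => 1) 2) := by
  intro x hx
  obtain ⟨hx, h01, h12, h20⟩ := (mem_SPset_triangle_iff 2 x).1 hx
  push_cast at h01 h12 h20
  have vertex (f : Fin 3 → ℕ) (hf : ∀ j, 2 * 1 ≤ ∑ i ∈ 𝒯 j, f i) :
      (fun i => (f i : ℝ)) ∈ NP (symb (𝕜 := 𝕜) 𝒯 (fun _ => 1) 2) :=
    natCast_mem_NP_symb f hf
  have c111 := vertex ![1, 1, 1] (by decide)
  have c022 := vertex ![0, 2, 2] (by decide)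
  have c202 := vertex ![2, 0, 2] (by decide)
  have c220 := vertex ![2, 2, 0] (by decide)
  obtain ⟨v, hv, hvx⟩ : ∃ v ∈ NP (symb (𝕜 := 𝕜) 𝒯 (fun _ => 1) 2), v ≤ x := by
    rcases le_or_gt (x 0) 1 with h0 | h0
    · exact ⟨_, convex_convexHull ℝ _ c111 c022 (hx 0) (sub_nonneg.2 h0) (add_sub_cancel _ _),
        fun i => by fin_cases i <;> simp <;> linarith⟩
    rcases le_or_gt (x 1) 1 with h1 | h1
    · exact ⟨_, convex_convexHull ℝ _ c111 c202 (hx 1) (sub_nonneg.2 h1) (add_sub_cancel _ _),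
        fun i => by fin_cases i <;> simp <;> linarith⟩
    rcases le_or_gt (x 2) 1 with h2 | h2
    · exact ⟨_, convex_convexHull ℝ _ c111 c220 (hx 2) (sub_nonneg.2 h2) (add_sub_cancel _ _),
        fun i => by fin_cases i <;> simp <;> linarith⟩
    exact ⟨_, c111, fun i => by fin_cases i <;> simp <;> linarith⟩
  exact mem_NP_of_le hv hvx

/-- for `I = (xy, yz, zx)`, `NP(I^{(2)}) = 2 · SP(I)` while `NP(I) ≠ SP(I)`. -/
theorem stmt14 {𝕜 : Type*} [Field 𝕜]
    (I : Ideal (MvPolynomial (Fin 3) 𝕜))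
    (hI : I = Ideal.span {X 0 * X 1, X 1 * X 2, X 2 * X 0}) :
    NP (symb (𝕜 := 𝕜) ![({0, 1} : Finset (Fin 3)), {1, 2}, {2, 0}] (fun _ => 1) 2) =
        (2 : ℝ) • SPset ![({0, 1} : Finset (Fin 3)), {1, 2}, {2, 0}] (fun _ => 1) ∧
      NP I ≠ SPset ![({0, 1} : Finset (Fin 3)), {1, 2}, {2, 0}] (fun _ => 1) := by
  constructor
  · rw [show (2 : ℝ) = (2 : ℕ) by norm_num, natCast_smul_SPset _ _ two_ne_zero]
    exact (NP_symb_subset_SPset _ _ 2).antisymm SPset_triangle_subset_NP_symb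
  · have hI_le : I ≤ Ideal.span (X '' ((Finset.univ : Finset (Fin 3)) : Set (Fin 3))) ^ 2 := by
      rw [hI, Ideal.span_le]
      rintro _ (rfl | rfl | rfl) <;>
        exact X_mul_X_mem_span_X_image_sq (Finset.mem_univ _) (Finset.mem_univ _)
    have hcentre : (fun _ => (1 / 2 : ℝ)) ∈ SPset 𝒯 (fun _ => 1) :=
      (mem_SPset_triangle_iff 1 _).2 (by norm_num)
    intro h
    have := NP_span_X_image_pow_subset _ _ (NP_mono hI_le (h ▸ hcentre))
    norm_num at this
end

section
/- Let I = ⋂_{1≤i₁<⋯<i_h≤n} (x_{i_1},…,x_{i_h}) ⊆ k[x₁,…,xₙ] be the codimension-h monomial star configuration with h < n. For each 0 ≤ a ≤ h−1, the point u with first a coordinates 0 and the remaining n−a coordinates equal to 1/(h−a) is a vertex of the symbolic polyhedron SP(I). Consequently, the lcm of the denominators of the coordinates of the vertices of SP(I) equals lcm(1,2,…,h). -/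
open MvPolynomial Pointwise

section StarConfigAux
open Finset

lemma perturb_zero {n h : ℕ} (hh : 0 < h) (hhn : h ≤ n)
    {v w : Fin n → ℝ}
    (hv : v ∈ Set.extremePoints ℝ {x : Fin n → ℝ | (∀ i, 0 ≤ x i) ∧
      ∀ s : Finset (Fin n), s.card = h → 1 ≤ ∑ i ∈ s, x i})
    (hw0 : ∀ i, v i = 0 → w i = 0)
    (hwt : ∀ s : Finset (Fin n), s.card = h → (∑ i ∈ s, v i) = 1 → (∑ i ∈ s, w i) = 0) :
    w = 0 := by
  obtain ⟨⟨hv0, hvs⟩, hext⟩ := hv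
  have hn : 0 < n := lt_of_lt_of_le hh hhn
  have huniv : (Finset.univ : Finset (Fin n)).Nonempty := by
    simpa [Finset.univ_nonempty_iff, ← Fin.pos_iff_nonempty]
  set T := (Finset.univ : Finset (Fin n)).powersetCard h with hT
  have hTne : T.Nonempty := Finset.powersetCard_nonempty.2 (by simpa using hhn)
  set f : Fin n → ℝ := fun i => if w i = 0 then 1 else v i / |w i| with hf
  set g : Finset (Fin n) → ℝ := fun s =>
    if (∑ i ∈ s, w i) = 0 then 1 else ((∑ i ∈ s, v i) - 1) / |∑ i ∈ s, w i| with hg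
  have hfpos : ∀ i, 0 < f i := by
    intro i
    simp only [hf]
    split
    · norm_num
    · rename_i hwi
      have hvi : 0 < v i := by
        rcases lt_or_eq_of_le (hv0 i) with h' | h'
        · exact h'
        · exact absurd (hw0 i h'.symm) hwi
      exact div_pos hvi (abs_pos.2 hwi)
  have hgpos : ∀ s ∈ T, 0 < g s := by
    intro s hs
    have hcard : s.card = h := by simpa [hT, Finset.mem_powersetCard_univ] using hs
    simp only [hg]
    split
    · norm_num
    · rename_i hws
      have h1 : 1 ≤ ∑ i ∈ s, v i := hvs s hcard
      have h2 : (∑ i ∈ s, v i) ≠ 1 := fun hEq => hws (hwt s hcard hEq)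
      have : 1 < ∑ i ∈ s, v i := lt_of_le_of_ne h1 (Ne.symm h2)
      exact div_pos (by linarith) (abs_pos.2 hws)
  set ε := min (Finset.univ.inf' huniv f) (T.inf' hTne g) with hε
  have hεf : ∀ i, ε ≤ f i := fun i =>
    le_trans (min_le_left _ _) (Finset.inf'_le f (Finset.mem_univ i))
  have hεg : ∀ s ∈ T, ε ≤ g s := fun s hs =>
    le_trans (min_le_right _ _) (Finset.inf'_le g hs)
  have hεpos : 0 < ε := by
    apply lt_min
    · obtain ⟨i, _, hi⟩ := Finset.exists_mem_eq_inf' huniv f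
      rw [hi]; exact hfpos i
    · obtain ⟨s, hs, hi⟩ := Finset.exists_mem_eq_inf' hTne g
      rw [hi]; exact hgpos s hs
  have key : ∀ c : ℝ, |c| ≤ ε → (fun i => v i + c * w i) ∈
      {x : Fin n → ℝ | (∀ i, 0 ≤ x i) ∧ ∀ s : Finset (Fin n), s.card = h → 1 ≤ ∑ i ∈ s, x i} := by
    intro c hc
    constructor
    · intro i
      show 0 ≤ v i + c * w i
      by_cases hwi : w i = 0
      · simp [hwi, hv0 i]
      · have h1 : ε ≤ v i / |w i| := by simpa [hf, hwi] using hεf i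
        have h2 : |c * w i| ≤ v i := by
          rw [abs_mul]
          calc |c| * |w i| ≤ ε * |w i| := by
                exact mul_le_mul_of_nonneg_right hc (abs_nonneg _)
            _ ≤ (v i / |w i|) * |w i| := mul_le_mul_of_nonneg_right h1 (abs_nonneg _)
            _ = v i := div_mul_cancel₀ _ (abs_ne_zero.2 hwi)
        have := neg_abs_le (c * w i)
        linarith
    · intro s hcard
      show 1 ≤ ∑ i ∈ s, (v i + c * w i)
      rw [Finset.sum_add_distrib, ← Finset.mul_sum]
      by_cases hws : (∑ i ∈ s, w i) = 0
      · rw [hws, mul_zero, add_zero]; exact hvs s hcard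
      · have hsT : s ∈ T := by simpa [hT, Finset.mem_powersetCard_univ] using hcard
        have h1 : ε ≤ ((∑ i ∈ s, v i) - 1) / |∑ i ∈ s, w i| := by
          simpa [hg, hws] using hεg s hsT
        have h2 : |c * ∑ i ∈ s, w i| ≤ (∑ i ∈ s, v i) - 1 := by
          rw [abs_mul]
          calc |c| * |∑ i ∈ s, w i| ≤ ε * |∑ i ∈ s, w i| :=
                mul_le_mul_of_nonneg_right hc (abs_nonneg _)
            _ ≤ (((∑ i ∈ s, v i) - 1) / |∑ i ∈ s, w i|) * |∑ i ∈ s, w i| :=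
                mul_le_mul_of_nonneg_right h1 (abs_nonneg _)
            _ = (∑ i ∈ s, v i) - 1 := div_mul_cancel₀ _ (abs_ne_zero.2 hws)
        have := neg_abs_le (c * ∑ i ∈ s, w i)
        linarith
  have hmem1 := key ε (by rw [abs_of_pos hεpos])
  have hmem2 := key (-ε) (by rw [abs_neg, abs_of_pos hεpos])
  have hseg : v ∈ openSegment ℝ (fun i => v i + ε * w i) (fun i => v i + (-ε) * w i) := by
    refine ⟨1/2, 1/2, by norm_num, by norm_num, by norm_num, ?_⟩
    funext i
    simp only [Pi.add_apply, Pi.smul_apply, smul_eq_mul]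
    ring
  have hEq := hext hmem1 hmem2 hseg
  funext i
  have := congrFun hEq i
  have : ε * w i = 0 := by linarith [congrFun hEq i]
  simpa using (mul_eq_zero.1 this).resolve_left (ne_of_gt hεpos)

lemma tight_swap {n h : ℕ} {v : Fin n → ℝ}
    (hv : ∀ s : Finset (Fin n), s.card = h → 1 ≤ ∑ i ∈ s, v i)
    {s : Finset (Fin n)} (hs : s.card = h) (hts : ∑ i ∈ s, v i = 1)
    {l k : Fin n} (hl : l ∈ s) (hk : k ∉ s) : v l ≤ v k := by
  by_contra hlt
  push_neg at hlt
  have hk' : k ∉ s.erase l := fun hmem => hk (Finset.mem_of_mem_erase hmem)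
  have hc0 : 0 < s.card := Finset.card_pos.2 ⟨l, hl⟩
  have hcard : (insert k (s.erase l)).card = h := by
    rw [Finset.card_insert_of_notMem hk', Finset.card_erase_of_mem hl, hs]
    omega
  have hsum : ∑ i ∈ insert k (s.erase l), v i = 1 - v l + v k := by
    rw [Finset.sum_insert hk', Finset.sum_erase_eq_sub hl, hts]; ring
  have := hv _ hcard
  rw [hsum] at this
  linarith

lemma part1_extreme {n h : ℕ} (hh : 0 < h) (hhn : h < n) (a : ℕ) (ha : a + 1 ≤ h) :
    (fun i : Fin n => if (i : ℕ) < a then 0 else 1 / ((h : ℝ) - (a : ℝ))) ∈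
      Set.extremePoints ℝ {x : Fin n → ℝ | (∀ i, 0 ≤ x i) ∧
        ∀ s : Finset (Fin n), s.card = h → 1 ≤ ∑ i ∈ s, x i} := by
  have han : a < n := by omega
  have hβpos : 0 < (h : ℝ) - (a : ℝ) := by
    have : (a : ℝ) < (h : ℝ) := by exact_mod_cast (by omega : a < h)
    linarith
  set β : ℝ := 1 / ((h : ℝ) - (a : ℝ)) with hβ
  have hβpos' : 0 < β := by positivity
  set u : Fin n → ℝ := fun i => if (i : ℕ) < a then 0 else β with hu
  set A : Finset (Fin n) := Finset.Iio (⟨a, han⟩ : Fin n) with hA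
  have hmemA : ∀ i : Fin n, i ∈ A ↔ (i : ℕ) < a := by
    intro i; rw [hA, Finset.mem_Iio, Fin.lt_def]
  have hcardA : A.card = a := by rw [hA, Fin.card_Iio]
  -- value of sum of u over any s of card h containing at least (h - a) non-A elements
  have hsum_u : ∀ s : Finset (Fin n), ∑ i ∈ s, u i = ((s.filter (fun i => i ∉ A)).card : ℝ) * β := by
    intro s
    rw [← Finset.sum_filter_add_sum_filter_not s (fun i => i ∈ A)]
    have h1 : ∑ i ∈ s.filter (fun i => i ∈ A), u i = 0 := by
      apply Finset.sum_eq_zero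
      intro i hi
      have : (i : ℕ) < a := (hmemA i).1 (Finset.mem_filter.1 hi).2
      simp [hu, this]
    have h2 : ∑ i ∈ s.filter (fun i => i ∉ A), u i =
        ((s.filter (fun i => i ∉ A)).card : ℝ) * β := by
      have hval : ∀ i ∈ s.filter (fun i => i ∉ A), u i = β := by
        intro i hi
        have hni : ¬ (i : ℕ) < a := fun hc => (Finset.mem_filter.1 hi).2 ((hmemA i).2 hc)
        simp [hu, hni]
      rw [Finset.sum_congr rfl hval, Finset.sum_const, nsmul_eq_mul]
    rw [h1, h2, zero_add]
  have hβcancel : ((h - a : ℕ) : ℝ) * β = 1 := by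
    rw [Nat.cast_sub (by omega), hβ]
    field_simp
  have huSP : u ∈ {x : Fin n → ℝ | (∀ i, 0 ≤ x i) ∧
      ∀ s : Finset (Fin n), s.card = h → 1 ≤ ∑ i ∈ s, x i} := by
    constructor
    · intro i
      show 0 ≤ if (i : ℕ) < a then 0 else β
      split
      · exact le_refl 0
      · exact hβpos'.le
    · intro s hs
      rw [hsum_u s]
      have hfle : (s.filter (fun i => i ∈ A)).card ≤ a := by
        calc (s.filter (fun i => i ∈ A)).card ≤ A.card :=
              Finset.card_le_card (fun i hi => (Finset.mem_filter.1 hi).2)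
          _ = a := hcardA
      have hfc : (s.filter (fun i => i ∈ A)).card + (s.filter (fun i => i ∉ A)).card = h := by
        rw [Finset.card_filter_add_card_filter_not]; exact hs
      have hge : h - a ≤ (s.filter (fun i => i ∉ A)).card := by omega
      calc (1 : ℝ) = ((h - a : ℕ) : ℝ) * β := hβcancel.symm
        _ ≤ ((s.filter (fun i => i ∉ A)).card : ℝ) * β := by
            apply mul_le_mul_of_nonneg_right _ hβpos'.le
            exact_mod_cast hge
  -- tight sets containing A
  have htight : ∀ s : Finset (Fin n), s.card = h → A ⊆ s → ∑ i ∈ s, u i = 1 := by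
    intro s hs hAs
    rw [hsum_u s]
    have : s.filter (fun i => i ∉ A) = s \ A := by
      ext i; simp [Finset.mem_sdiff, Finset.mem_filter, and_comm]
    rw [this, Finset.card_sdiff_of_subset hAs, hs, hcardA, hβcancel]
  refine ⟨huSP, ?_⟩
  rintro x hx y hy ⟨c, d, hc, hd, hcd, hxy⟩
  -- pointwise identity
  have hpt : ∀ i, c * x i + d * y i = u i := fun i => congrFun hxy i
  -- zero coordinates
  have hx0 : ∀ i ∈ A, x i = 0 ∧ y i = 0 := by
    intro i hi
    have hua : u i = 0 := by simp [hu, (hmemA i).1 hi]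
    have h1 := hpt i
    rw [hua] at h1
    have h2 : 0 ≤ x i := hx.1 i
    have h3 : 0 ≤ y i := hy.1 i
    constructor <;> nlinarith
  -- tight transfer
  have htx : ∀ s : Finset (Fin n), s.card = h → A ⊆ s →
      ∑ i ∈ s, x i = 1 ∧ ∑ i ∈ s, y i = 1 := by
    intro s hs hAs
    have h1 : c * (∑ i ∈ s, x i) + d * (∑ i ∈ s, y i) = 1 := by
      rw [Finset.mul_sum, Finset.mul_sum, ← Finset.sum_add_distrib]
      rw [Finset.sum_congr rfl (fun i _ => hpt i)]
      exact htight s hs hAs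
    have h2 : 1 ≤ ∑ i ∈ s, x i := hx.2 s hs
    have h3 : 1 ≤ ∑ i ∈ s, y i := hy.2 s hs
    constructor <;> nlinarith
  -- x is constant on the complement of A
  have hconst : ∀ z : Fin n → ℝ, (∀ s : Finset (Fin n), s.card = h → A ⊆ s → ∑ i ∈ s, z i = 1) →
      ∀ i j : Fin n, i ∉ A → j ∉ A → z i = z j := by
    intro z hz i j hi hj
    rcases eq_or_ne i j with rfl | hij
    · rfl
    have hsub : insert i A ⊆ Finset.univ.erase j := by
      intro k hk
      rcases Finset.mem_insert.1 hk with rfl | hk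
      · exact Finset.mem_erase.2 ⟨hij, Finset.mem_univ _⟩
      · exact Finset.mem_erase.2 ⟨fun hEq => hj (hEq ▸ hk), Finset.mem_univ _⟩
    have hcardins : (insert i A).card = a + 1 := by
      rw [Finset.card_insert_of_notMem hi, hcardA]
    obtain ⟨s, hs1, hs2, hs3⟩ := Finset.exists_subsuperset_card_eq (n := h) hsub
      (by rw [hcardins]; omega) (by rw [Finset.card_erase_of_mem (Finset.mem_univ j), Finset.card_univ, Fintype.card_fin]; omega)
    have hAs : A ⊆ s := fun k hk => hs1 (Finset.mem_insert_of_mem hk)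
    have his : i ∈ s := hs1 (Finset.mem_insert_self i A)
    have hjs : j ∉ s := fun hjs => (Finset.mem_erase.1 (hs2 hjs)).1 rfl
    set s' := insert j (s.erase i) with hs'
    have hji : j ∉ s.erase i := fun hmem => hjs (Finset.mem_of_mem_erase hmem)
    have hcard' : s'.card = h := by
      rw [hs', Finset.card_insert_of_notMem hji, Finset.card_erase_of_mem his, hs3]
      omega
    have hAs' : A ⊆ s' := by
      intro k hk
      exact Finset.mem_insert_of_mem (Finset.mem_erase.2 ⟨fun hEq => hi (hEq ▸ hk), hAs hk⟩)
    have e1 := hz s hs3 hAs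
    have e2 := hz s' hcard' hAs'
    rw [hs', Finset.sum_insert hji, Finset.sum_erase_eq_sub his, e1] at e2
    linarith
  have hval : ∀ z : Fin n → ℝ, (∀ i ∈ A, z i = 0) →
      (∀ s : Finset (Fin n), s.card = h → A ⊆ s → ∑ i ∈ s, z i = 1) → z = u := by
    intro z hz0 hz
    obtain ⟨s, hs1, -, hs3⟩ := Finset.exists_subsuperset_card_eq (n := h) (Finset.subset_univ A)
      (by rw [hcardA]; omega) (by rw [Finset.card_univ, Fintype.card_fin]; omega)
    funext i
    by_cases hi : i ∈ A
    · rw [hz0 i hi, hu]; simp [(hmemA i).1 hi]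
    · have hsum : ∑ k ∈ s, z k = 1 := hz s hs3 hs1
      have hsplit : ∑ k ∈ s, z k = ∑ k ∈ s \ A, z k := by
        rw [← Finset.sum_sdiff hs1, Finset.sum_eq_zero (fun k hk => hz0 k hk), add_zero]
      have hzc : ∀ k ∈ s \ A, z k = z i := fun k hk =>
        hconst z hz k i (Finset.mem_sdiff.1 hk).2 hi
      have hsum2 : ∑ k ∈ s \ A, z k = (((s \ A).card : ℕ) : ℝ) * z i := by
        rw [Finset.sum_congr rfl hzc, Finset.sum_const, nsmul_eq_mul]
      have hcardd : (s \ A).card = h - a := by rw [Finset.card_sdiff_of_subset hs1, hs3, hcardA]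
      have hz_i : ((h - a : ℕ) : ℝ) * z i = 1 := by
        rw [← hcardd, ← hsum2, ← hsplit, hsum]
      have hne : ((h - a : ℕ) : ℝ) ≠ 0 := by
        have h0 : (0:ℝ) < ((h - a : ℕ) : ℝ) := by exact_mod_cast (by omega : 0 < h - a)
        exact h0.ne'
      have hz_iβ : z i = β := mul_left_cancel₀ hne (hz_i.trans hβcancel.symm)
      have hni : ¬ (i : ℕ) < a := fun hc => hi ((hmemA i).2 hc)
      rw [hz_iβ, hu]
      simp [hni]
  exact hval x (fun i hi => (hx0 i hi).1) (fun s hs hAs => (htx s hs hAs).1)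

lemma classify {n h : ℕ} (hh : 0 < h) (hhn : h < n) {v : Fin n → ℝ}
    (hv : v ∈ Set.extremePoints ℝ {x : Fin n → ℝ | (∀ i, 0 ≤ x i) ∧
      ∀ s : Finset (Fin n), s.card = h → 1 ≤ ∑ i ∈ s, x i}) :
    ∃ a : ℕ, a < h ∧ ∀ i, v i = 0 ∨ v i = 1 / ((h : ℝ) - (a : ℝ)) := by
  have hv0 : ∀ i, 0 ≤ v i := hv.1.1
  have hvs : ∀ s : Finset (Fin n), s.card = h → 1 ≤ ∑ i ∈ s, v i := hv.1.2
  -- existence of a nonzero coordinate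
  have hNne : (Finset.univ.filter (fun i => v i ≠ 0)).Nonempty := by
    obtain ⟨s, -, hs⟩ := Finset.exists_subset_card_eq (s := (Finset.univ : Finset (Fin n))) (n := h)
      (by rw [Finset.card_univ, Fintype.card_fin]; omega)
    by_contra hne
    rw [Finset.not_nonempty_iff_eq_empty, Finset.filter_eq_empty_iff] at hne
    have : ∑ i ∈ s, v i = 0 := Finset.sum_eq_zero (fun i _ => by
      have := hne (Finset.mem_univ i); simpa using this)
    have h1 := hvs s hs
    rw [this] at h1
    linarith
  set N := Finset.univ.filter (fun i => v i ≠ 0) with hN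
  set m := N.inf' hNne v with hm
  obtain ⟨i₀, hi₀N, hi₀⟩ := Finset.exists_mem_eq_inf' hNne v
  have hi₀ne : v i₀ ≠ 0 := by simpa [hN] using hi₀N
  have hmpos : 0 < m := by
    rw [hm, hi₀]
    exact lt_of_le_of_ne (hv0 i₀) (Ne.symm hi₀ne)
  have hmle : ∀ i, v i ≠ 0 → m ≤ v i := fun i hi =>
    Finset.inf'_le v (by simp [hN, hi])
  have htri : ∀ i, v i = 0 ∨ v i = m ∨ m < v i := by
    intro i
    by_cases h0 : v i = 0
    · exact Or.inl h0
    · rcases lt_or_eq_of_le (hmle i h0) with h' | h'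
      · exact Or.inr (Or.inr h')
      · exact Or.inr (Or.inl h'.symm)
  set Z := Finset.univ.filter (fun i => v i = 0) with hZ
  set B := Finset.univ.filter (fun i => v i = m) with hB
  set C := Finset.univ.filter (fun i => m < v i) with hC
  have hZa : Z.card < h := by
    by_contra hcon
    push_neg at hcon
    obtain ⟨t, ht1, ht2⟩ := Finset.exists_subset_card_eq (s := Z) (n := h) hcon
    have : ∑ i ∈ t, v i = 0 := Finset.sum_eq_zero (fun i hi => by
      have := ht1 hi; simpa [hZ] using this)
    have h1 := hvs t ht2
    rw [this] at h1
    linarith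
  refine ⟨Z.card, hZa, ?_⟩
  -- existence of a tight set
  have hex : ∃ s : Finset (Fin n), s.card = h ∧ ∑ i ∈ s, v i = 1 := by
    by_contra hcon
    push_neg at hcon
    have := perturb_zero hh (le_of_lt hhn) hv
      (w := Pi.single i₀ 1)
      (fun i hi => by
        have : i ≠ i₀ := fun hEq => hi₀ne (hEq ▸ hi)
        exact Pi.single_eq_of_ne this 1)
      (fun s hs hts => absurd hts (hcon s hs))
    have := congrFun this i₀
    simp at this
  obtain ⟨s₀, hs₀c, hs₀t⟩ := hex
  -- Z ⊆ any tight set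
  have hZsub : ∀ s : Finset (Fin n), s.card = h → ∑ i ∈ s, v i = 1 → Z ⊆ s := by
    intro s hs hts k hk
    by_contra hks
    have hl : ∃ l ∈ s, v l ≠ 0 := by
      by_contra hcon
      push_neg at hcon
      have : ∑ i ∈ s, v i = 0 := Finset.sum_eq_zero hcon
      rw [this] at hts; norm_num at hts
    obtain ⟨l, hls, hlne⟩ := hl
    have := tight_swap hvs hs hts hls hks
    have hk0 : v k = 0 := by simpa [hZ] using hk
    have hlpos : 0 < v l := lt_of_le_of_ne (hv0 l) (Ne.symm hlne)
    rw [hk0] at this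
    linarith
  by_cases hcase : ∀ j ∈ s₀, ¬ m < v j
  · -- all nonzero coords are m; m = 1/(h - Z.card)
    have hZs₀ : Z ⊆ s₀ := hZsub s₀ hs₀c hs₀t
    have hsplit : ∑ i ∈ s₀, v i = ((s₀ \ Z).card : ℝ) * m := by
      have hz2 : ∑ k ∈ Z, v k = 0 := Finset.sum_eq_zero (fun k hk => by simpa [hZ] using hk)
      rw [← Finset.sum_sdiff hZs₀, hz2, add_zero]
      have : ∀ k ∈ s₀ \ Z, v k = m := by
        intro k hk
        obtain ⟨hk1, hk2⟩ := Finset.mem_sdiff.1 hk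
        rcases htri k with h' | h' | h'
        · exact absurd (by simp [hZ, h'] : k ∈ Z) hk2
        · exact h'
        · exact absurd h' (hcase k hk1)
      rw [Finset.sum_congr rfl this, Finset.sum_const, nsmul_eq_mul]
    have hcardZ : (s₀ \ Z).card = h - Z.card := by
      rw [Finset.card_sdiff_of_subset hZs₀, hs₀c]
    have hkey : ((h - Z.card : ℕ) : ℝ) * m = 1 := by
      rw [← hcardZ, ← hsplit, hs₀t]
    -- C is empty
    have hCempty : ∀ j, ¬ m < v j := by
      intro j hj
      have hjnotin : ∀ s : Finset (Fin n), s.card = h → ∑ i ∈ s, v i = 1 → j ∉ s := by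
        intro s hs hts hjmem
        have hsub : ¬ s₀ ⊆ s := by
          intro hsub
          have : s₀ = s := Finset.eq_of_subset_of_card_le hsub (by omega)
          exact hcase j (this ▸ hjmem) hj
        obtain ⟨k, hks₀, hks⟩ := Finset.not_subset.1 hsub
        have h1 := tight_swap hvs hs hts hjmem hks
        have h2 : v k ≤ m := by
          rcases htri k with h' | h' | h'
          · rw [h']; exact hmpos.le
          · rw [h']
          · exact absurd h' (hcase k hks₀)
        linarith
      have := perturb_zero hh (le_of_lt hhn) hv
        (w := Pi.single j 1)
        (fun i hi => by
          have hij : i ≠ j := fun hEq => by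
            rw [hEq] at hi; rw [hi] at hj; linarith
          exact Pi.single_eq_of_ne hij 1)
        (fun s hs hts => Finset.sum_eq_zero (fun i hi => by
          have hij : i ≠ j := fun hEq => hjnotin s hs hts (hEq ▸ hi)
          exact Pi.single_eq_of_ne hij 1))
      have := congrFun this j
      simp at this
    have hmval : m = 1 / ((h : ℝ) - (Z.card : ℝ)) := by
      have hcast : ((h - Z.card : ℕ) : ℝ) = (h : ℝ) - (Z.card : ℝ) :=
        Nat.cast_sub (by omega)
      rw [hcast] at hkey
      have hne : (h : ℝ) - (Z.card : ℝ) ≠ 0 := by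
        have : (Z.card : ℝ) < (h : ℝ) := by exact_mod_cast hZa
        linarith
      field_simp at hkey ⊢
      linarith
    intro i
    rcases htri i with h' | h' | h'
    · exact Or.inl h'
    · exact Or.inr (h'.trans hmval)
    · exact absurd h' (hCempty i)
  · -- contradiction case
    exfalso
    push_neg at hcase
    obtain ⟨j₀, hj₀s, hj₀⟩ := hcase
    have hZs₀ : Z ⊆ s₀ := hZsub s₀ hs₀c hs₀t
    have hBsub : ∀ s : Finset (Fin n), s.card = h → ∑ i ∈ s, v i = 1 →
        (∃ j ∈ s, m < v j) → B ⊆ s := by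
      intro s hs hts hex k hk
      obtain ⟨j, hjs, hj⟩ := hex
      by_contra hks
      have := tight_swap hvs hs hts hjs hks
      have hkm : v k = m := by simpa [hB] using hk
      rw [hkm] at this
      linarith
    have hBs₀ : B ⊆ s₀ := hBsub s₀ hs₀c hs₀t ⟨j₀, hj₀s, hj₀⟩
    have hZBdisj : Disjoint Z B := by
      rw [Finset.disjoint_filter]
      intro i _ hi hc
      rw [hi] at hc
      exact hmpos.ne' hc.symm
    have hZBsub : Z ∪ B ⊆ s₀ := Finset.union_subset hZs₀ hBs₀
    have hj₀ZB : j₀ ∉ Z ∪ B := by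
      rw [Finset.mem_union]
      rintro (hmem | hmem)
      · have : v j₀ = 0 := by simpa [hZ] using hmem
        rw [this] at hj₀; linarith
      · have : v j₀ = m := by simpa [hB] using hmem
        rw [this] at hj₀; linarith
    have hcardZB : Z.card + B.card < h := by
      have h1 : (Z ∪ B).card = Z.card + B.card := Finset.card_union_of_disjoint hZBdisj
      have h2 : Z ∪ B ⊆ s₀.erase j₀ := fun k hk =>
        Finset.mem_erase.2 ⟨fun hEq => hj₀ZB (hEq ▸ hk), hZBsub hk⟩
      have h3 := Finset.card_le_card h2
      rw [Finset.card_erase_of_mem hj₀s, hs₀c, h1] at h3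
      omega
    -- every tight set contains Z ∪ B and exactly h - Z.card - B.card elements of C
    have hstruct : ∀ s : Finset (Fin n), s.card = h → ∑ i ∈ s, v i = 1 →
        B ⊆ s ∧ (s.filter (fun i => m < v i)).card = h - Z.card - B.card := by
      intro s hs hts
      have hZs : Z ⊆ s := hZsub s hs hts
      have hjC : ∃ j ∈ s, m < v j := by
        by_contra hcon
        push_neg at hcon
        have hsub : s ⊆ Z ∪ B := by
          intro k hk
          rcases htri k with h' | h' | h'
          · exact Finset.mem_union_left _ (by simp [hZ, h'])
          · exact Finset.mem_union_right _ (by simp [hB, h'])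
          · exact absurd h' (by simpa using hcon k hk)
        have := Finset.card_le_card hsub
        rw [hs, Finset.card_union_of_disjoint hZBdisj] at this
        omega
      have hBs : B ⊆ s := hBsub s hs hts hjC
      refine ⟨hBs, ?_⟩
      have hdecomp : s.filter (fun i => m < v i) = s \ (Z ∪ B) := by
        ext k
        simp only [Finset.mem_filter, Finset.mem_sdiff, Finset.mem_union]
        constructor
        · rintro ⟨hk1, hk2⟩
          refine ⟨hk1, ?_⟩
          rintro (hmem | hmem)
          · have : v k = 0 := by simpa [hZ] using hmem
            rw [this] at hk2; linarith
          · have : v k = m := by simpa [hB] using hmem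
            rw [this] at hk2; linarith
        · rintro ⟨hk1, hk2⟩
          refine ⟨hk1, ?_⟩
          rcases htri k with h' | h' | h'
          · exact absurd (Or.inl (by simp [hZ, h'])) hk2
          · exact absurd (Or.inr (by simp [hB, h'])) hk2
          · exact h'
      rw [hdecomp, Finset.card_sdiff_of_subset (Finset.union_subset hZs hBs), hs,
        Finset.card_union_of_disjoint hZBdisj]
      omega
    -- the perturbation
    set b := B.card with hb
    set cC := h - Z.card - b with hcC
    have hcCpos : 0 < cC := by omega
    have hbpos : 0 < b := Finset.card_pos.2 ⟨i₀, by simp [hB, hm, hi₀.symm]⟩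
    set w : Fin n → ℝ := fun i => if v i = m then (cC : ℝ) else if m < v i then -(b : ℝ) else 0
      with hw
    have hw0' : ∀ i, v i = 0 → w i = 0 := by
      intro i hi
      rw [hw]
      have h1 : ¬ v i = m := by rw [hi]; exact hmpos.ne
      have h2 : ¬ m < v i := by rw [hi]; exact not_lt.2 hmpos.le
      simp [h1, h2]
    have hwt' : ∀ s : Finset (Fin n), s.card = h → ∑ i ∈ s, v i = 1 → ∑ i ∈ s, w i = 0 := by
      intro s hs hts
      obtain ⟨hBs, hCs⟩ := hstruct s hs hts
      have e1 : ∑ i ∈ s.filter (fun i => v i = m), w i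
          = ((s.filter (fun i => v i = m)).card : ℝ) * (cC : ℝ) := by
        have ec : ∀ i ∈ s.filter (fun i => v i = m), w i = (cC : ℝ) := by
          intro i hi
          rw [hw]
          simp [(Finset.mem_filter.1 hi).2]
        rw [Finset.sum_congr rfl ec, Finset.sum_const, nsmul_eq_mul]
      have hffC : (s.filter (fun i => ¬ v i = m)).filter (fun i => m < v i)
          = s.filter (fun i => m < v i) := by
        ext k
        simp only [Finset.mem_filter]
        constructor
        · rintro ⟨⟨h1, -⟩, h2⟩; exact ⟨h1, h2⟩
        · rintro ⟨h1, h2⟩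
          exact ⟨⟨h1, fun hEq => by rw [hEq] at h2; exact lt_irrefl m h2⟩, h2⟩
      have e2 : ∑ i ∈ s.filter (fun i => ¬ v i = m), w i
          = ((s.filter (fun i => m < v i)).card : ℝ) * (-(b : ℝ)) := by
        rw [← Finset.sum_filter_add_sum_filter_not (s.filter (fun i => ¬ v i = m))
          (fun i => m < v i), hffC]
        have ec : ∀ i ∈ s.filter (fun i => m < v i), w i = -(b : ℝ) := by
          intro i hi
          obtain ⟨-, h2⟩ := Finset.mem_filter.1 hi
          rw [hw]
          have h1 : ¬ v i = m := fun hEq => by rw [hEq] at h2; exact lt_irrefl m h2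
          simp [h1, h2]
        have ez : ∑ i ∈ (s.filter (fun i => ¬ v i = m)).filter (fun i => ¬ m < v i), w i = 0 := by
          apply Finset.sum_eq_zero
          intro i hi
          obtain ⟨hi1, h2⟩ := Finset.mem_filter.1 hi
          obtain ⟨-, h1⟩ := Finset.mem_filter.1 hi1
          rw [hw]
          simp [h1, h2]
        rw [Finset.sum_congr rfl ec, Finset.sum_const, nsmul_eq_mul, ez, add_zero]
      have hfB : s.filter (fun i => v i = m) = B := by
        ext k
        simp only [Finset.mem_filter, hB, Finset.mem_univ, true_and]
        constructor
        · exact fun hk => hk.2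
        · intro hk
          exact ⟨hBs (by simp [hB, hk]), hk⟩
      rw [← Finset.sum_filter_add_sum_filter_not s (fun i => v i = m), e1, e2, hfB, hCs]
      push_cast [Nat.cast_sub]
      ring
    have hwzero := perturb_zero hh (le_of_lt hhn) hv hw0' hwt'
    have hcontra := congrFun hwzero i₀
    rw [hw] at hcontra
    have hvi₀ : v i₀ = m := by rw [hm, hi₀]
    have : cC = 0 := by simpa [hvi₀] using hcontra
    omega

end StarConfigAux

/-- vertices of the symbolic polyhedron of a star configuration. -/
theorem stmt15 (n h : ℕ) (hh : 0 < h) (hhn : h < n)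
    (SP : Set (Fin n → ℝ))
    (hSP : SP = {x | (∀ i, 0 ≤ x i) ∧
      ∀ s : Finset (Fin n), s.card = h → 1 ≤ ∑ i ∈ s, x i}) :
    (∀ a : ℕ, a ≤ h - 1 →
        (fun i : Fin n => if (i : ℕ) < a then 0 else 1 / ((h : ℝ) - (a : ℝ))) ∈
          Set.extremePoints ℝ SP) ∧
      (∀ m : ℕ, 0 < m →
        ((∀ v ∈ Set.extremePoints ℝ SP, ∀ i, ∃ z : ℤ, (m : ℝ) * v i = z) ↔
          (Finset.Icc 1 h).lcm id ∣ m)) := by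
  subst hSP
  constructor
  · intro a ha
    exact part1_extreme hh hhn a (by omega)
  · intro m hm
    constructor
    · intro hall
      apply Finset.lcm_dvd
      intro d hd
      obtain ⟨hd1, hd2⟩ := Finset.mem_Icc.1 hd
      have hu := part1_extreme hh hhn (h - d) (by omega)
      have hin : n - 1 < n := by omega
      obtain ⟨z, hz⟩ := hall _ hu ⟨n - 1, hin⟩
      have hni : ¬ ((⟨n - 1, hin⟩ : Fin n) : ℕ) < h - d := by
        simp only [Fin.val_mk]
        omega
      rw [if_neg hni] at hz
      have hcast : ((h - d : ℕ) : ℝ) = (h : ℝ) - (d : ℝ) := Nat.cast_sub (by omega)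
      rw [hcast] at hz
      have hdne : (d : ℝ) ≠ 0 := by
        have : (0:ℝ) < (d:ℝ) := by exact_mod_cast hd1
        exact this.ne'
      have hmz : (m : ℝ) = (d : ℝ) * (z : ℝ) := by
        have : (h : ℝ) - ((h : ℝ) - (d : ℝ)) = (d : ℝ) := by ring
        rw [this] at hz
        field_simp at hz
        linarith [hz]
      have hdvdz : (d : ℤ) ∣ (m : ℤ) := ⟨z, by exact_mod_cast hmz⟩
      exact_mod_cast hdvdz
    · intro hdvd v hvext i
      obtain ⟨a, hah, hform⟩ := classify hh hhn hvext
      rcases hform i with h0 | hval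
      · exact ⟨0, by rw [h0]; simp⟩
      · have hmem : h - a ∈ Finset.Icc 1 h := Finset.mem_Icc.2 ⟨by omega, by omega⟩
        have hdvd2 : (h - a) ∣ m := dvd_trans (Finset.dvd_lcm (f := id) (b := h - a) hmem) hdvd
        obtain ⟨q, hq⟩ := hdvd2
        refine ⟨(q : ℤ), ?_⟩
        rw [hval]
        have hcast : ((h - a : ℕ) : ℝ) = (h : ℝ) - (a : ℝ) := Nat.cast_sub (by omega)
        have hne : (h : ℝ) - (a : ℝ) ≠ 0 := by
          have : (a : ℝ) < (h : ℝ) := by exact_mod_cast hah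
          linarith
        have hmq : (m : ℝ) = ((h : ℝ) - (a : ℝ)) * (q : ℝ) := by
          rw [← hcast]
          exact_mod_cast congrArg (Nat.cast : ℕ → ℝ) hq
        rw [hmq]
        field_simp
        norm_cast
end

section
/- Let P ⊆ ℝⁿ_{≥0} be a nonempty closed convex set with P + ℝⁿ_{≥0} ⊆ P. Define the family ℐ = {I_k}_{k∈ℕ} of monomial ideals by I_k = ⟨x^a : a ∈ kP ∩ ℤⁿ⟩. Then ℐ is a graded family of monomial ideals (I_p·I_q ⊆ I_{p+q}), and its Newton–Okounkov body Δ(ℐ) equals P. -/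
open MvPolynomial Pointwise

/- Since `P` is an upper set, so is every dilate `k • P` (`k > 0`), hence a monomial lies in `I_k`
exactly when its exponent lies in `k • P`; so every normalized exponent `a / k` of `I_k` lies in
`P`, and `P` closed gives `Δ(ℐ) ⊆ P`. Conversely `x ∈ P` is the limit of `⌈k x⌉ / k`, which lies
above `x` and hence in `P`. Gradedness is `p • P + q • P ⊆ (p + q) • P` for convex `P`. -/

theorem MvPolynomial.monomial_one_mem_span_monomial_image_iff {σ R : Type*} [CommSemiring R]
    [Nontrivial R] {S : Set (σ →₀ ℕ)} (hS : IsUpperSet S) (a : σ →₀ ℕ) :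
    monomial a (1 : R) ∈ Ideal.span ((fun b => monomial b (1 : R)) '' S) ↔ a ∈ S := by
  classical
  refine ⟨fun h => ?_, fun h => Ideal.subset_span ⟨a, h, rfl⟩⟩
  rw [mem_ideal_span_monomial_image, support_monomial, if_neg one_ne_zero] at h
  obtain ⟨b, hb, hba⟩ := h a (Finset.mem_singleton_self a)
  exact hS hba hb

theorem isUpperSet_of_add_nonneg_mem {α : Type*} [AddCommGroup α] [PartialOrder α]
    [IsOrderedAddMonoid α] {P : Set α} (hP : ∀ x ∈ P, ∀ w, 0 ≤ w → x + w ∈ P) : IsUpperSet P :=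
  fun x y hxy hx => by simpa using hP x hx (y - x) (sub_nonneg.2 hxy)

theorem IsUpperSet.smul_of_pos {𝕜 M : Type*} [Field 𝕜] [LinearOrder 𝕜] [IsStrictOrderedRing 𝕜]
    [AddCommGroup M] [PartialOrder M] [IsOrderedAddMonoid M] [Module 𝕜 M] [PosSMulMono 𝕜 M]
    {P : Set M} (hP : IsUpperSet P) {c : 𝕜} (hc : 0 < c) : IsUpperSet (c • P) :=
  hP.image (OrderIso.smulRight hc)

theorem monotone_finsuppNatCast {σ : Type*} : Monotone fun (a : σ →₀ ℕ) (i : σ) => (a i : ℝ) :=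
  fun _ _ hab i => Nat.cast_le.2 (hab i)

theorem natCast_div_mem_iff_mem_smul {σ : Type*} {P : Set (σ → ℝ)} {k : ℕ} (hk : 0 < k)
    (a : σ →₀ ℕ) : (fun i => (a i : ℝ) / k) ∈ P ↔ (fun i => (a i : ℝ)) ∈ (k : ℝ) • P := by
  rw [Set.mem_smul_set_iff_inv_smul_mem₀ (by positivity)]
  simp only [div_eq_inv_mul]
  rfl

theorem tendsto_natCeil_mul_div_natCast {x : ℝ} (hx : 0 ≤ x) :
    Filter.Tendsto (fun k : ℕ => (⌈x * k⌉₊ : ℝ) / k) Filter.atTop (nhds x) :=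
  (tendsto_nat_ceil_mul_div_atTop hx).comp tendsto_natCast_atTop_atTop

section Wolff

variable {n : ℕ} (𝕜 : Type*) [Field 𝕜]

noncomputable def wolffIdeal (P : Set (Fin n → ℝ)) (k : ℕ) : Ideal (MvPolynomial (Fin n) 𝕜) :=
  Ideal.span ((fun a => monomial a (1 : 𝕜)) '' {a | (fun i => (a i : ℝ)) ∈ (k : ℝ) • P})

variable {𝕜}

theorem wolffIdeal_mul_le {P : Set (Fin n → ℝ)} (hconv : Convex ℝ P) (p q : ℕ) :
    wolffIdeal 𝕜 P p * wolffIdeal 𝕜 P q ≤ wolffIdeal 𝕜 P (p + q) := by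
  rw [wolffIdeal, wolffIdeal, Ideal.span_mul_span', Ideal.span_le]
  rintro _ ⟨_, ⟨a, ha, rfl⟩, _, ⟨b, hb, rfl⟩, rfl⟩
  refine Ideal.subset_span ⟨a + b, ?_, by simp only [monomial_mul, one_mul]⟩
  have hsum : ((p + q : ℕ) : ℝ) • P = (p : ℝ) • P + (q : ℝ) • P := by
    push_cast
    exact hconv.add_smul p.cast_nonneg q.cast_nonneg
  have hab : (fun i => ((a + b) i : ℝ)) = (fun i => (a i : ℝ)) + fun i => (b i : ℝ) := by
    ext i
    simp
  show (fun i => ((a + b) i : ℝ)) ∈ ((p + q : ℕ) : ℝ) • P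
  rw [hab, hsum]
  exact Set.add_mem_add ha hb

theorem nObody_wolffIdeal {P : Set (Fin n → ℝ)} (hcl : IsClosed P) (hup : IsUpperSet P)
    (hP0 : ∀ x ∈ P, ∀ i, 0 ≤ x i) : NObody (wolffIdeal 𝕜 P) = P := by
  refine subset_antisymm (closure_minimal ?_ hcl) fun x hx => ?_
  · rintro _ ⟨k, ⟨_, rfl⟩, hk, a, ha, rfl⟩
    have hupk := (hup.smul_of_pos (Nat.cast_pos (α := ℝ) |>.2 hk)).preimage monotone_finsuppNatCast
    exact (natCast_div_mem_iff_mem_smul hk a).2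
      ((MvPolynomial.monomial_one_mem_span_monomial_image_iff hupk a).1 ha)
  refine mem_closure_of_tendsto (tendsto_pi_nhds.2 fun i => tendsto_natCeil_mul_div_natCast
    (hP0 x hx i)) (Filter.eventually_gt_atTop 0 |>.mono fun k hk => ?_)
  let a : Fin n →₀ ℕ := Finsupp.equivFunOnFinite.symm fun i => ⌈x i * k⌉₊
  have hxa : x ≤ fun i => (a i : ℝ) / k := fun i => by
    rw [le_div_iff₀ (Nat.cast_pos.2 hk)]
    exact Nat.le_ceil _
  have ha : (fun i => (a i : ℝ)) ∈ (k : ℝ) • P := (natCast_div_mem_iff_mem_smul hk a).1 (hup hxa hx)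
  exact Set.mem_iUnion.2 ⟨k, hk, a, Ideal.subset_span ⟨a, ha, rfl⟩, rfl⟩

end Wolff

theorem stmt17_general {n : ℕ} {𝕜 : Type*} [Field 𝕜] (P : Set (Fin n → ℝ))
    (hcl : IsClosed P) (hconv : Convex ℝ P)
    (hP0 : ∀ x ∈ P, ∀ i, 0 ≤ x i)
    (habs : ∀ x ∈ P, ∀ w : Fin n → ℝ, (∀ i, 0 ≤ w i) → x + w ∈ P)
    (F : ℕ → Ideal (MvPolynomial (Fin n) 𝕜))
    (hF : ∀ k, F k = Ideal.span
      {f | ∃ a : Fin n →₀ ℕ, (fun i => (a i : ℝ)) ∈ (k : ℝ) • P ∧ f = monomial a (1 : 𝕜)}) :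
    (∀ p q : ℕ, F p * F q ≤ F (p + q)) ∧ NObody F = P := by
  obtain rfl : F = wolffIdeal 𝕜 P := funext fun k => by
    rw [hF k, wolffIdeal]
    congr 1
    ext f
    exact exists_congr fun a => and_congr_right' eq_comm
  exact ⟨wolffIdeal_mul_le hconv, nObody_wolffIdeal hcl (isUpperSet_of_add_nonneg_mem habs) hP0⟩

/-- Wolff's construction realizing any closed convex absorbing set as a
Newton–Okounkov body. -/
theorem stmt17 {n : ℕ} {𝕜 : Type*} [Field 𝕜] (P : Set (Fin n → ℝ))
    (hne : P.Nonempty) (hcl : IsClosed P) (hconv : Convex ℝ P)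
    (hP0 : ∀ x ∈ P, ∀ i, 0 ≤ x i)
    (habs : ∀ x ∈ P, ∀ w : Fin n → ℝ, (∀ i, 0 ≤ w i) → x + w ∈ P)
    (F : ℕ → Ideal (MvPolynomial (Fin n) 𝕜))
    (hF : ∀ k, F k = Ideal.span
      {f | ∃ a : Fin n →₀ ℕ, (fun i => (a i : ℝ)) ∈ (k : ℝ) • P ∧ f = monomial a (1 : 𝕜)}) :
    (∀ p q : ℕ, F p * F q ≤ F (p + q)) ∧ NObody F = P :=
  stmt17_general P hcl hconv hP0 habs F hF
end
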